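/- arXiv:1211.4934 — 11 statements merged into one kernel-verified Lean document; each statement's English description precedes it below -/
import Mathlib

section
/- Suppose (p,q,r) ≠ (2,3,5). Then Δ(N₀) = −1, and Δ(n) ≥ 0 for every integer n > N₀. -/
/-! Multiplying by `pqr` and eliminating `e₀` with the defining relation turns each ceiling into a
remainder: with `a = (-n p') mod p`, `b = (-n q') mod q`, `c = (-n r') mod r`,
`pqr · Δ(n) = n - N₀ - pqr + (p - 1 - a) qr + (q - 1 - b) pr + (r - 1 - c) pq`.
The three brackets are nonnegative, so `Δ(n) > -1` as soon as `n > N₀`. At `n = N₀` they vanish: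
modulo `p` we have `N₀ ≡ -qr`, so `-N₀ p' ≡ p' qr ≡ -1` by the defining relation. -/

theorem Int.natCast_mul_ceil_div (a : ℤ) (s : ℕ) :
    (s : ℤ) * ⌈(a : ℚ) / s⌉ = a + (-a) % s := by
  rw [Rat.ceil_intCast_div_natCast, Int.emod_def]
  ring

theorem Int.emod_eq_sub_one_of_dvd_add_one {x m : ℤ} (hm : 0 < m) (h : m ∣ x + 1) :
    x % m = m - 1 := by
  have hx : x ≡ m - 1 [ZMOD m] := Int.modEq_iff_dvd.mpr <| by
    rw [sub_sub, add_comm 1 x]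
    exact dvd_sub dvd_rfl h
  rw [hx.eq, Int.emod_eq_of_lt (by omega) (by omega)]

def delta (e0 : ℤ) (p q r p' q' r' n : ℕ) : ℤ :=
  1 + |e0| * n - ⌈(n * p' : ℚ) / p⌉ - ⌈(n * q' : ℚ) / q⌉ - ⌈(n * r' : ℚ) / r⌉

section

variable {p q r p' q' r' : ℕ} {e0 : ℤ}

theorem e0_neg_of_eq
    (heq : e0 * (p * q * r : ℤ) + (p' : ℤ) * q * r + (p : ℤ) * q' * r + (p : ℤ) * q * r' = -1) :
    e0 < 0 := by
  by_contra! he0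
  have : 0 ≤ e0 * (p * q * r : ℤ) := by positivity
  have : 0 ≤ (p' : ℤ) * q * r + (p : ℤ) * q' * r + (p : ℤ) * q * r' := by positivity
  linarith

theorem pqr_mul_delta
    (heq : e0 * (p * q * r : ℤ) + (p' : ℤ) * q * r + (p : ℤ) * q' * r + (p : ℤ) * q * r' = -1)
    (n : ℕ) :
    (p * q * r : ℤ) * delta e0 p q r p' q' r' n =
      p * q * r + n - (-(n * p' : ℤ)) % p * (q * r) - (-(n * q' : ℤ)) % q * (p * r)
        - (-(n * r' : ℤ)) % r * (p * q) := by
  have hp := Int.natCast_mul_ceil_div (n * p') p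
  have hq := Int.natCast_mul_ceil_div (n * q') q
  have hr := Int.natCast_mul_ceil_div (n * r') r
  push_cast at hp hq hr
  rw [delta, abs_of_neg (e0_neg_of_eq heq)]
  linear_combination (-(n : ℤ)) * heq - (q * r : ℤ) * hp - (p * r : ℤ) * hq - (p * q : ℤ) * hr

theorem neg_mul_emod_eq_sub_one (hp : 0 < p)
    (heq : e0 * (p * q * r : ℤ) + (p' : ℤ) * q * r + (p : ℤ) * q' * r + (p : ℤ) * q * r' = -1)
    {N0 : ℕ} (hN0 : (N0 : ℤ) = (p * q * r : ℤ) - p * q - q * r - p * r) :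
    (-(N0 * p' : ℤ)) % p = p - 1 :=
  Int.emod_eq_sub_one_of_dvd_add_one (by omega)
    ⟨-(p' * q * r) + p' * q + p' * r - e0 * q * r - q' * r - q * r', by
      rw [hN0]; linear_combination heq⟩

theorem pqr_mul_delta_N0 (hp : 0 < p) (hq : 0 < q) (hr : 0 < r)
    (heq : e0 * (p * q * r : ℤ) + (p' : ℤ) * q * r + (p : ℤ) * q' * r + (p : ℤ) * q * r' = -1)
    {N0 : ℕ} (hN0 : (N0 : ℤ) = (p * q * r : ℤ) - p * q - q * r - p * r) :
    (p * q * r : ℤ) * delta e0 p q r p' q' r' N0 = -(p * q * r) := by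
  rw [pqr_mul_delta heq, neg_mul_emod_eq_sub_one hp heq hN0,
    neg_mul_emod_eq_sub_one (p := q) (q := p) (r := r) (p' := q') (q' := p') (r' := r') (e0 := e0) hq (by linear_combination heq)
      (by rw [hN0]; ring),
    neg_mul_emod_eq_sub_one (p := r) (q := p) (r := q) (p' := r') (q' := p') (r' := q') (e0 := e0) hr
      (by linear_combination heq) (by rw [hN0]; ring), hN0]
  ring

theorem sub_le_pqr_mul_delta (hp : 0 < p) (hq : 0 < q) (hr : 0 < r)
    (heq : e0 * (p * q * r : ℤ) + (p' : ℤ) * q * r + (p : ℤ) * q' * r + (p : ℤ) * q * r' = -1)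
    {N0 : ℕ} (hN0 : (N0 : ℤ) = (p * q * r : ℤ) - p * q - q * r - p * r) (n : ℕ) :
    (n : ℤ) - N0 - p * q * r ≤ (p * q * r : ℤ) * delta e0 p q r p' q' r' n := by
  have residue_le {s : ℕ} (hs : 0 < s) (a w : ℤ) (hw : 0 ≤ w) :
      a % s * w ≤ (s - 1) * w :=
    mul_le_mul_of_nonneg_right (Int.le_sub_one_of_lt (Int.emod_lt_of_pos _ (by omega))) hw
  have ha := residue_le hp (-(n * p' : ℤ)) (q * r) (by positivity)
  have hb := residue_le hq (-(n * q' : ℤ)) (p * r) (by positivity)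
  have hc := residue_le hr (-(n * r' : ℤ)) (p * q) (by positivity)
  rw [pqr_mul_delta heq, hN0]
  linarith

end

theorem stmt_1_general (p q r : ℕ) (hp : 1 < p) (hpq : p < q) (hqr : q < r)
    (e0 : ℤ) (p' q' r' : ℕ)
    (heq : e0 * (p * q * r : ℤ) + (p' : ℤ) * q * r + (p : ℤ) * q' * r + (p : ℤ) * q * r' = -1)
    (Δ : ℕ → ℤ)
    (hΔ : ∀ n : ℕ, Δ n =
      1 + |e0| * n - ⌈(n * p' : ℚ) / p⌉ - ⌈(n * q' : ℚ) / q⌉ - ⌈(n * r' : ℚ) / r⌉)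
    (N0 : ℕ) (hN0 : (N0 : ℤ) = (p * q * r : ℤ) - p * q - q * r - p * r) :
    Δ N0 = -1 ∧ ∀ n : ℕ, N0 < n → 0 ≤ Δ n := by
  have hp0 : 0 < p := by omega
  have hq0 : 0 < q := by omega
  have hr0 : 0 < r := by omega
  have hpqr : (0 : ℤ) < p * q * r := by positivity
  have hΔ' (n : ℕ) : Δ n = delta e0 p q r p' q' r' n := hΔ n
  refine ⟨?_, fun n hn => ?_⟩
  · refine mul_left_cancel₀ hpqr.ne' ?_
    rw [hΔ', pqr_mul_delta_N0 hp0 hq0 hr0 heq hN0]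
    ring
  · have hlow := sub_le_pqr_mul_delta hp0 hq0 hr0 heq hN0 n
    rw [← hΔ'] at hlow
    have : 0 < (p * q * r : ℤ) * (Δ n + 1) := by linarith
    have := pos_of_mul_pos_right this hpqr.le
    omega

/-- For a triple of pairwise coprime integers `1 < p < q < r` with `(p,q,r) ≠ (2,3,5)`,
the function `Δ` satisfies `Δ(N₀) = -1` and `Δ(n) ≥ 0` for all `n > N₀`,
where `N₀ = pqr - pq - qr - pr`. -/
theorem stmt_1 (p q r : ℕ) (hp : 1 < p) (hpq : p < q) (hqr : q < r)
    (hcopq : Nat.Coprime p q) (hcopr : Nat.Coprime p r) (hcoqr : Nat.Coprime q r)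
    (e0 : ℤ) (p' q' r' : ℕ)
    (hp' : p' ≤ p - 1) (hq' : q' ≤ q - 1) (hr' : r' ≤ r - 1)
    (heq : e0 * (p * q * r : ℤ) + (p' : ℤ) * q * r + (p : ℤ) * q' * r + (p : ℤ) * q * r' = -1)
    (Δ : ℕ → ℤ)
    (hΔ : ∀ n : ℕ, Δ n =
      1 + |e0| * n - ⌈(n * p' : ℚ) / p⌉ - ⌈(n * q' : ℚ) / q⌉ - ⌈(n * r' : ℚ) / r⌉)
    (N0 : ℕ) (hN0 : (N0 : ℤ) = (p * q * r : ℤ) - p * q - q * r - p * r)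
    (hne : (p, q, r) ≠ (2, 3, 5)) :
    Δ N0 = -1 ∧ ∀ n : ℕ, N0 < n → 0 ≤ Δ n :=
  stmt_1_general p q r hp hpq hqr e0 p' q' r' heq Δ hΔ N0 hN0
end

section
/- For every integer i with 0 ≤ i ≤ N₀, one has Δ(i) = −Δ(N₀ − i). -/
/-!
Write `N₀ = pqr - pq - qr - pr`. Substituting the defining relation of `e₀`, one gets
`N₀ p' ≡ 1 (mod p)`, and likewise for `q` and `r`. Whenever `m + n ≡ 1 (mod s)`, the two ceilings
`⌈m / s⌉` and `⌈n / s⌉` add up to `(m + n - 1) / s + 1`; applied to `m = i p'`, `n = (N₀ - i) p'` and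
its analogues, this turns `Δ(i) + Δ(N₀ - i)` into a polynomial expression that vanishes by the
defining relation of `e₀`.
-/

lemma Rat.ceil_intCast_div_eq_iff {s : ℤ} (hs : 0 < s) (m c : ℤ) :
    ⌈(m : ℚ) / s⌉ = c ↔ (c - 1) * s < m ∧ m ≤ c * s := by
  have hsQ : (0 : ℚ) < s := by exact_mod_cast hs
  rw [Int.ceil_eq_iff, lt_div_iff₀ hsQ, div_le_iff₀ hsQ]
  norm_cast

lemma Rat.ceil_intCast_div_add_ceil_intCast_div_of_add_eq {s : ℤ} (hs : 0 < s) {m n k : ℤ}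
    (h : m + n = s * k + 1) : ⌈(m : ℚ) / s⌉ + ⌈(n : ℚ) / s⌉ = k + 1 := by
  obtain ⟨hm_lower, hm_upper⟩ := (Rat.ceil_intCast_div_eq_iff hs m _).mp rfl
  rw [← eq_sub_iff_add_eq', Rat.ceil_intCast_div_eq_iff hs]
  constructor <;> linarith

lemma ceil_mul_div_add_ceil_sub_mul_div (x x' : ℕ) {N i : ℕ} (hx : 0 < x) (hi : i ≤ N) {k : ℤ}
    (h : (N : ℤ) * x' = x * k + 1) :
    ⌈(i * x' : ℚ) / x⌉ + ⌈((N - i : ℕ) * x' : ℚ) / x⌉ = k + 1 := by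
  have := Rat.ceil_intCast_div_add_ceil_intCast_div_of_add_eq (m := i * x') (n := (N - i : ℕ) * x')
    (k := k) (Int.natCast_pos.mpr hx) (by push_cast [Nat.cast_sub hi]; linear_combination h)
  push_cast at this
  exact this

theorem stmt_2_general (p q r : ℕ) (hp : 1 < p) (hpq : p < q) (hqr : q < r)
    (e0 : ℤ) (p' q' r' : ℕ)
    (heq : e0 * (p * q * r : ℤ) + (p' : ℤ) * q * r + (p : ℤ) * q' * r + (p : ℤ) * q * r' = -1)
    (Δ : ℕ → ℤ)
    (hΔ : ∀ n : ℕ, Δ n =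
      1 + |e0| * n - ⌈(n * p' : ℚ) / p⌉ - ⌈(n * q' : ℚ) / q⌉ - ⌈(n * r' : ℚ) / r⌉)
    (N0 : ℕ) (hN0 : (N0 : ℤ) = (p * q * r : ℤ) - p * q - q * r - p * r) :
    ∀ i : ℕ, i ≤ N0 → Δ i = -Δ (N0 - i) := by
  intro i hi
  have he0 : e0 < 0 := by
    have : (0 : ℤ) ≤ (p' : ℤ) * q * r + (p : ℤ) * q' * r + (p : ℤ) * q * r' := by positivity
    exact neg_of_mul_neg_left (by linarith) (by positivity : (0 : ℤ) ≤ p * q * r)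
  -- each `k` below is `(N₀ x' - 1) / x`, made explicit by substituting `hN0` and `heq`
  have hsum_p := ceil_mul_div_add_ceil_sub_mul_div p p' (by omega) hi
    (k := q * r * p' - q * p' - r * p' + e0 * q * r + q' * r + q * r')
    (by linear_combination (p' : ℤ) * hN0 - heq)
  have hsum_q := ceil_mul_div_add_ceil_sub_mul_div q q' (by omega) hi
    (k := p * r * q' - p * q' - r * q' + e0 * p * r + p' * r + p * r')
    (by linear_combination (q' : ℤ) * hN0 - heq)
  have hsum_r := ceil_mul_div_add_ceil_sub_mul_div r r' (by omega) hi
    (k := p * q * r' - p * r' - q * r' + e0 * p * q + p' * q + p * q')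
    (by linear_combination (r' : ℤ) * hN0 - heq)
  rw [hΔ, hΔ, abs_of_neg he0]
  linear_combination -hsum_p - hsum_q - hsum_r - heq - e0 * hN0 - e0 * Nat.cast_sub (R := ℤ) hi

/-- Central symmetry of `Δ`: for `0 ≤ i ≤ N₀ = pqr - pq - qr - pr`,
one has `Δ(i) = -Δ(N₀ - i)`. -/
theorem stmt_2 (p q r : ℕ) (hp : 1 < p) (hpq : p < q) (hqr : q < r)
    (hcopq : Nat.Coprime p q) (hcopr : Nat.Coprime p r) (hcoqr : Nat.Coprime q r)
    (e0 : ℤ) (p' q' r' : ℕ)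
    (hp' : p' ≤ p - 1) (hq' : q' ≤ q - 1) (hr' : r' ≤ r - 1)
    (heq : e0 * (p * q * r : ℤ) + (p' : ℤ) * q * r + (p : ℤ) * q' * r + (p : ℤ) * q * r' = -1)
    (Δ : ℕ → ℤ)
    (hΔ : ∀ n : ℕ, Δ n =
      1 + |e0| * n - ⌈(n * p' : ℚ) / p⌉ - ⌈(n * q' : ℚ) / q⌉ - ⌈(n * r' : ℚ) / r⌉)
    (N0 : ℕ) (hN0 : (N0 : ℤ) = (p * q * r : ℤ) - p * q - q * r - p * r) :
    ∀ i : ℕ, i ≤ N0 → Δ i = -Δ (N0 - i) :=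
  stmt_2_general p q r hp hpq hqr e0 p' q' r' heq Δ hΔ N0 hN0
end

section
/- Suppose (p,q,r) ≠ (2,3,5). For every integer n with 0 ≤ n ≤ N₀, one has Δ(n) = 1 if and only if n ∈ G(pq, pr, qr). -/
lemma ceil_decomp_aux (a b k : ℕ) (hk : 0 < k) :
    ∃ A : ℤ, (k:ℤ) * ⌈((a:ℚ) * (b:ℚ)) / (k:ℚ)⌉ = (a:ℤ) * b + A ∧ 0 ≤ A ∧ A < k := by
  have hkq : (0:ℚ) < k := by exact_mod_cast hk
  refine ⟨(k:ℤ) * ⌈((a:ℚ) * (b:ℚ)) / (k:ℚ)⌉ - (a:ℤ) * b, by ring, ?_, ?_⟩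
  · have h1 : ((a:ℚ) * b) / k ≤ (⌈((a:ℚ) * (b:ℚ)) / (k:ℚ)⌉ : ℚ) := Int.le_ceil _
    rw [div_le_iff₀ hkq] at h1
    have h2 : (a:ℤ) * b ≤ ⌈((a:ℚ) * (b:ℚ)) / (k:ℚ)⌉ * k := by exact_mod_cast h1
    linarith
  · have h1 : (⌈((a:ℚ) * (b:ℚ)) / (k:ℚ)⌉ : ℚ) < ((a:ℚ) * b) / k + 1 :=
      Int.ceil_lt_add_one _
    have h1' : ((⌈((a:ℚ) * (b:ℚ)) / (k:ℚ)⌉ : ℚ) - 1) < ((a:ℚ) * b) / k := by linarith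
    rw [lt_div_iff₀ hkq] at h1'
    have h2 : (⌈((a:ℚ) * (b:ℚ)) / (k:ℚ)⌉ - 1) * k < (a:ℤ) * b := by exact_mod_cast h1'
    linarith

/-- Suppose `(p,q,r) ≠ (2,3,5)`.  For `0 ≤ n ≤ N₀`, one has `Δ(n) = 1` if and only if
`n` belongs to the numerical semigroup `G(pq, pr, qr)` generated by `pq`, `pr` and `qr`. -/
theorem stmt_4 (p q r : ℕ) (hp : 1 < p) (hpq : p < q) (hqr : q < r)
    (hcopq : Nat.Coprime p q) (hcopr : Nat.Coprime p r) (hcoqr : Nat.Coprime q r)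
    (e0 : ℤ) (p' q' r' : ℕ)
    (hp' : p' ≤ p - 1) (hq' : q' ≤ q - 1) (hr' : r' ≤ r - 1)
    (heq : e0 * (p * q * r : ℤ) + (p' : ℤ) * q * r + (p : ℤ) * q' * r + (p : ℤ) * q * r' = -1)
    (Δ : ℕ → ℤ)
    (hΔ : ∀ n : ℕ, Δ n =
      1 + |e0| * n - ⌈(n * p' : ℚ) / p⌉ - ⌈(n * q' : ℚ) / q⌉ - ⌈(n * r' : ℚ) / r⌉)
    (N0 : ℕ) (hN0 : (N0 : ℤ) = (p * q * r : ℤ) - p * q - q * r - p * r)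
    (hne : (p, q, r) ≠ (2, 3, 5)) :
    ∀ n : ℕ, n ≤ N0 →
      (Δ n = 1 ↔ ∃ a b c : ℕ, n = a * (q * r) + b * (p * r) + c * (p * q)) := by
  have hpn : 0 < p := by omega
  have hqn : 0 < q := by omega
  have hrn : 0 < r := by omega
  have hp0 : (0:ℤ) < p := by exact_mod_cast hpn
  have hq0 : (0:ℤ) < q := by exact_mod_cast hqn
  have hr0 : (0:ℤ) < r := by exact_mod_cast hrn
  -- e0 < 0
  have he0 : e0 < 0 := by
    by_contra h
    push_neg at h
    have h1 : (0:ℤ) ≤ e0 * (p * q * r : ℤ) := by positivity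
    have h2 : (0:ℤ) ≤ (p' : ℤ) * q * r := by positivity
    have h3 : (0:ℤ) ≤ (p : ℤ) * q' * r := by positivity
    have h4 : (0:ℤ) ≤ (p : ℤ) * q * r' := by positivity
    linarith
  -- coprimality over ℤ
  have cpq : IsCoprime (p:ℤ) (q:ℤ) := Nat.isCoprime_iff_coprime.mpr hcopq
  have cpr : IsCoprime (p:ℤ) (r:ℤ) := Nat.isCoprime_iff_coprime.mpr hcopr
  have cqr : IsCoprime (q:ℤ) (r:ℤ) := Nat.isCoprime_iff_coprime.mpr hcoqr
  intro n hn
  obtain ⟨A, hAeq, hA0, hAp⟩ := ceil_decomp_aux n p' p hpn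
  obtain ⟨B, hBeq, hB0, hBq⟩ := ceil_decomp_aux n q' q hqn
  obtain ⟨C, hCeq, hC0, hCr⟩ := ceil_decomp_aux n r' r hrn
  -- key identity
  have key : (p:ℤ) * q * r * Δ n
      = (p:ℤ) * q * r + ((n:ℤ) - A * ((q:ℤ) * r) - B * ((p:ℤ) * r) - C * ((p:ℤ) * q)) := by
    rw [hΔ n, abs_of_neg he0]
    push_cast
    linear_combination (-(q:ℤ) * r) * hAeq + (-(p:ℤ) * r) * hBeq + (-(p:ℤ) * q) * hCeq
      + (-(n:ℤ)) * heq
  set m : ℤ := (n:ℤ) - A * ((q:ℤ) * r) - B * ((p:ℤ) * r) - C * ((p:ℤ) * q) with hm_def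
  -- divisibilities
  have hdA : (p:ℤ) ∣ ((n:ℤ) - A * ((q:ℤ) * r)) := by
    have h1 : (p:ℤ) ∣ ((n:ℤ) * p' + A) := Dvd.intro _ hAeq
    have h2 : (p:ℤ) ∣ ((p':ℤ) * q * r + 1) :=
      ⟨-(e0 * q * r) - (q':ℤ) * r - (q:ℤ) * r', by linear_combination heq⟩
    have h3 := dvd_sub (h2.mul_left (n:ℤ)) (h1.mul_left ((q:ℤ) * r))
    have h4 : (n:ℤ) * ((p':ℤ) * q * r + 1) - ((q:ℤ) * r) * ((n:ℤ) * p' + A)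
        = (n:ℤ) - A * ((q:ℤ) * r) := by ring
    rwa [h4] at h3
  have hdB : (q:ℤ) ∣ ((n:ℤ) - B * ((p:ℤ) * r)) := by
    have h1 : (q:ℤ) ∣ ((n:ℤ) * q' + B) := Dvd.intro _ hBeq
    have h2 : (q:ℤ) ∣ ((p:ℤ) * q' * r + 1) :=
      ⟨-(e0 * p * r) - (p':ℤ) * r - (p:ℤ) * r', by linear_combination heq⟩
    have h3 := dvd_sub (h2.mul_left (n:ℤ)) (h1.mul_left ((p:ℤ) * r))
    have h4 : (n:ℤ) * ((p:ℤ) * q' * r + 1) - ((p:ℤ) * r) * ((n:ℤ) * q' + B)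
        = (n:ℤ) - B * ((p:ℤ) * r) := by ring
    rwa [h4] at h3
  have hdC : (r:ℤ) ∣ ((n:ℤ) - C * ((p:ℤ) * q)) := by
    have h1 : (r:ℤ) ∣ ((n:ℤ) * r' + C) := Dvd.intro _ hCeq
    have h2 : (r:ℤ) ∣ ((p:ℤ) * q * r' + 1) :=
      ⟨-(e0 * p * q) - (p':ℤ) * q - (p:ℤ) * q', by linear_combination heq⟩
    have h3 := dvd_sub (h2.mul_left (n:ℤ)) (h1.mul_left ((p:ℤ) * q))
    have h4 : (n:ℤ) * ((p:ℤ) * q * r' + 1) - ((p:ℤ) * q) * ((n:ℤ) * r' + C)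
        = (n:ℤ) - C * ((p:ℤ) * q) := by ring
    rwa [h4] at h3
  have hpm : (p:ℤ) ∣ m := by
    have h : m = ((n:ℤ) - A * ((q:ℤ) * r)) + (p:ℤ) * (-(B * r) - C * q) := by
      rw [hm_def]; ring
    rw [h]
    exact dvd_add hdA ⟨_, rfl⟩
  have hqm : (q:ℤ) ∣ m := by
    have h : m = ((n:ℤ) - B * ((p:ℤ) * r)) + (q:ℤ) * (-(A * r) - C * p) := by
      rw [hm_def]; ring
    rw [h]
    exact dvd_add hdB ⟨_, rfl⟩
  have hrm : (r:ℤ) ∣ m := by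
    have h : m = ((n:ℤ) - C * ((p:ℤ) * q)) + (r:ℤ) * (-(A * q) - B * p) := by
      rw [hm_def]; ring
    rw [h]
    exact dvd_add hdC ⟨_, rfl⟩
  have hpqrm : (p:ℤ) * q * r ∣ m :=
    (cpr.mul_left cqr).mul_dvd (cpq.mul_dvd hpm hqm) hrm
  constructor
  · -- Δ n = 1 → n ∈ G
    intro h
    rw [h, mul_one] at key
    have hm0 : m = 0 := by linarith
    refine ⟨A.toNat, B.toNat, C.toNat, ?_⟩
    have hAt : (A.toNat : ℤ) = A := Int.toNat_of_nonneg hA0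
    have hBt : (B.toNat : ℤ) = B := Int.toNat_of_nonneg hB0
    have hCt : (C.toNat : ℤ) = C := Int.toNat_of_nonneg hC0
    have : (n:ℤ) = (A.toNat : ℤ) * ((q:ℤ) * r) + (B.toNat : ℤ) * ((p:ℤ) * r)
        + (C.toNat : ℤ) * ((p:ℤ) * q) := by
      rw [hAt, hBt, hCt]
      have := hm_def
      linarith [hm0]
    exact_mod_cast this
  · -- n ∈ G → Δ n = 1
    rintro ⟨a, b, c, hnabc⟩
    have hz : (n:ℤ) = (a:ℤ) * ((q:ℤ) * r) + (b:ℤ) * ((p:ℤ) * r) + (c:ℤ) * ((p:ℤ) * q) := by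
      exact_mod_cast hnabc
    -- A ≤ a
    have hAle : A ≤ (a:ℤ) := by
      have hd : (p:ℤ) ∣ ((a:ℤ) - A) * ((q:ℤ) * r) := by
        have he : ((a:ℤ) - A) * ((q:ℤ) * r)
            = ((n:ℤ) - A * ((q:ℤ) * r)) - (p:ℤ) * ((b:ℤ) * r + (c:ℤ) * q) := by
          rw [hz]; ring
        rw [he]
        exact dvd_sub hdA ⟨_, rfl⟩
      have hd2 : (p:ℤ) ∣ ((a:ℤ) - A) := (cpq.mul_right cpr).dvd_of_dvd_mul_right hd
      by_contra hlt
      push_neg at hlt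
      have hpos : 0 < A - (a:ℤ) := by linarith
      have hd3 : (p:ℤ) ∣ (A - (a:ℤ)) := by
        rw [← neg_sub]; exact dvd_neg.mpr hd2
      have := Int.le_of_dvd hpos hd3
      have ha0 : (0:ℤ) ≤ a := Int.ofNat_nonneg a
      linarith
    have hBle : B ≤ (b:ℤ) := by
      have hd : (q:ℤ) ∣ ((b:ℤ) - B) * ((p:ℤ) * r) := by
        have he : ((b:ℤ) - B) * ((p:ℤ) * r)
            = ((n:ℤ) - B * ((p:ℤ) * r)) - (q:ℤ) * ((a:ℤ) * r + (c:ℤ) * p) := by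
          rw [hz]; ring
        rw [he]
        exact dvd_sub hdB ⟨_, rfl⟩
      have hd2 : (q:ℤ) ∣ ((b:ℤ) - B) := (cpq.symm.mul_right cqr).dvd_of_dvd_mul_right hd
      by_contra hlt
      push_neg at hlt
      have hpos : 0 < B - (b:ℤ) := by linarith
      have hd3 : (q:ℤ) ∣ (B - (b:ℤ)) := by
        rw [← neg_sub]; exact dvd_neg.mpr hd2
      have := Int.le_of_dvd hpos hd3
      have hb0 : (0:ℤ) ≤ b := Int.ofNat_nonneg b
      linarith
    have hCle : C ≤ (c:ℤ) := by
      have hd : (r:ℤ) ∣ ((c:ℤ) - C) * ((p:ℤ) * q) := by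
        have he : ((c:ℤ) - C) * ((p:ℤ) * q)
            = ((n:ℤ) - C * ((p:ℤ) * q)) - (r:ℤ) * ((a:ℤ) * q + (b:ℤ) * p) := by
          rw [hz]; ring
        rw [he]
        exact dvd_sub hdC ⟨_, rfl⟩
      have hd2 : (r:ℤ) ∣ ((c:ℤ) - C) := (cpr.symm.mul_right cqr.symm).dvd_of_dvd_mul_right hd
      by_contra hlt
      push_neg at hlt
      have hpos : 0 < C - (c:ℤ) := by linarith
      have hd3 : (r:ℤ) ∣ (C - (c:ℤ)) := by
        rw [← neg_sub]; exact dvd_neg.mpr hd2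
      have := Int.le_of_dvd hpos hd3
      have hc0 : (0:ℤ) ≤ c := Int.ofNat_nonneg c
      linarith
    -- 0 ≤ m
    have hm_repr : m = ((a:ℤ) - A) * ((q:ℤ) * r) + ((b:ℤ) - B) * ((p:ℤ) * r)
        + ((c:ℤ) - C) * ((p:ℤ) * q) := by
      rw [hm_def, hz]; ring
    have hm0 : 0 ≤ m := by
      rw [hm_repr]
      have t1 : (0:ℤ) ≤ ((a:ℤ) - A) * ((q:ℤ) * r) :=
        mul_nonneg (by linarith) (by positivity)
      have t2 : (0:ℤ) ≤ ((b:ℤ) - B) * ((p:ℤ) * r) :=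
        mul_nonneg (by linarith) (by positivity)
      have t3 : (0:ℤ) ≤ ((c:ℤ) - C) * ((p:ℤ) * q) :=
        mul_nonneg (by linarith) (by positivity)
      linarith
    -- m < pqr
    have hnN : (n:ℤ) ≤ (N0:ℤ) := by exact_mod_cast hn
    have hm_lt : m < (p:ℤ) * q * r := by
      have t1 : (0:ℤ) ≤ A * ((q:ℤ) * r) := mul_nonneg hA0 (by positivity)
      have t2 : (0:ℤ) ≤ B * ((p:ℤ) * r) := mul_nonneg hB0 (by positivity)
      have t3 : (0:ℤ) ≤ C * ((p:ℤ) * q) := mul_nonneg hC0 (by positivity)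
      have hpq' : (0:ℤ) < (p:ℤ) * q := by positivity
      have hqr' : (0:ℤ) < (q:ℤ) * r := by positivity
      have hpr' : (0:ℤ) < (p:ℤ) * r := by positivity
      rw [hm_def]
      rw [hN0] at hnN
      linarith
    have hm_eq : m = 0 := by
      rcases hm0.lt_or_eq with h | h
      · exfalso
        have := Int.le_of_dvd h hpqrm
        linarith
      · exact h.symm
    rw [hm_eq, add_zero] at key
    have hne' : ((p:ℤ) * q * r) ≠ 0 := by positivity
    have : (p:ℤ) * q * r * Δ n = (p:ℤ) * q * r * 1 := by rw [key]; ring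
    exact mul_left_cancel₀ hne' this
end

section
/- Suppose (p,q,r) ≠ (2,3,5). Then κ(p,q,r) equals the number of lattice points (x,y,z) ∈ ℕ³ satisfying q·r·x + p·r·y + p·q·z ≤ N₀ (i.e., the number of lattice points in the tetrahedron with vertices (0,0,0), (N₀/qr, 0, 0), (0, N₀/pr, 0), (0, 0, N₀/pq)), and this number also equals the cardinality of G(pq, pr, qr) ∩ [0, N₀]. -/
namespace Stmt7Aux

lemma ceil_mul (n m k : ℕ) (hk : 0 < k) :
    (k : ℤ) * ⌈((n : ℚ) * (m : ℚ)) / (k : ℚ)⌉ = (n : ℤ) * m + (-((n : ℤ) * m)) % k := by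
  have hk' : (0:ℤ) < (k:ℤ) := by exact_mod_cast hk
  set a : ℤ := (n:ℤ) * m with ha
  set A : ℤ := (-a) % k with hA
  have hA0 : 0 ≤ A := Int.emod_nonneg _ (ne_of_gt hk')
  have hA1 : A < k := Int.emod_lt_of_pos _ hk'
  set c : ℤ := -((-a) / (k:ℤ)) with hc
  have hdiv : a + A = k * c := by
    have h := Int.mul_ediv_add_emod (-a) (k:ℤ)
    simp only [hc, hA]
    linarith
  have hq : ((n:ℚ) * (m:ℚ)) = ((a : ℤ) : ℚ) := by push_cast [ha]; ring
  have hceil : ⌈((n : ℚ) * (m : ℚ)) / (k : ℚ)⌉ = c := by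
    rw [hq, Int.ceil_eq_iff]
    have hkQ : (0:ℚ) < (k:ℚ) := by exact_mod_cast hk
    constructor
    · rw [lt_div_iff₀ hkQ]
      have : ((c:ℤ) - 1) * k < a := by nlinarith
      exact_mod_cast this
    · rw [div_le_iff₀ hkQ]
      have : a ≤ (c:ℤ) * k := by nlinarith
      exact_mod_cast this
  rw [hceil]
  linarith

lemma dvd_small_eq_zero {k d : ℤ} (h : k ∣ d) (h1 : -k < d) (h2 : d < k) : d = 0 :=
  Int.eq_zero_of_abs_lt_dvd h (abs_lt.mpr ⟨h1, h2⟩)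

end Stmt7Aux

set_option maxHeartbeats 1000000 in
/-- Suppose `(p,q,r) ≠ (2,3,5)`.  Then `κ(p,q,r) = |Σₙ min{0, Δ(n)}|` equals the number of
lattice points `(x,y,z) ∈ ℕ³` with `qr·x + pr·y + pq·z ≤ N₀`, and also equals the
cardinality of `G(pq,pr,qr) ∩ [0, N₀]`. -/
theorem stmt_7 (p q r : ℕ) (hp : 1 < p) (hpq : p < q) (hqr : q < r)
    (hcopq : Nat.Coprime p q) (hcopr : Nat.Coprime p r) (hcoqr : Nat.Coprime q r)
    (e0 : ℤ) (p' q' r' : ℕ)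
    (hp' : p' ≤ p - 1) (hq' : q' ≤ q - 1) (hr' : r' ≤ r - 1)
    (heq : e0 * (p * q * r : ℤ) + (p' : ℤ) * q * r + (p : ℤ) * q' * r + (p : ℤ) * q * r' = -1)
    (Δ : ℕ → ℤ)
    (hΔ : ∀ n : ℕ, Δ n =
      1 + |e0| * n - ⌈(n * p' : ℚ) / p⌉ - ⌈(n * q' : ℚ) / q⌉ - ⌈(n * r' : ℚ) / r⌉)
    (N0 : ℕ) (hN0 : (N0 : ℤ) = (p * q * r : ℤ) - p * q - q * r - p * r)
    (hne : (p, q, r) ≠ (2, 3, 5)) :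
    |∑ᶠ n : ℕ, min 0 (Δ n)| =
      ({t : ℕ × ℕ × ℕ | q * r * t.1 + p * r * t.2.1 + p * q * t.2.2 ≤ N0}.ncard : ℤ) ∧
    |∑ᶠ n : ℕ, min 0 (Δ n)| =
      ({n : ℕ | (∃ a b c : ℕ, n = a * (q * r) + b * (p * r) + c * (p * q)) ∧ n ≤ N0}.ncard : ℤ) := by
  have hp0 : 0 < p := by omega
  have hq0 : 0 < q := by omega
  have hr0 : 0 < r := by omega
  set P : ℤ := (p:ℤ) * q * r with hPdef
  have hP0 : 0 < P := by positivity
  have he0 : |e0| = -e0 := by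
    have h1 : (0:ℤ) ≤ (p' : ℤ) * q * r + (p : ℤ) * q' * r + (p : ℤ) * q * r' := by positivity
    have h2 : e0 * P ≤ -1 := by linarith
    have : e0 < 0 := by nlinarith
    exact abs_of_neg this
  -- residues
  set A : ℕ → ℤ := fun n => (-((n:ℤ) * p')) % p with hAdef
  set B : ℕ → ℤ := fun n => (-((n:ℤ) * q')) % q with hBdef
  set C : ℕ → ℤ := fun n => (-((n:ℤ) * r')) % r with hCdef
  set s : ℕ → ℤ := fun n => A n * ((q:ℤ) * r) + B n * ((p:ℤ) * r) + C n * ((p:ℤ) * q) with hsdef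
  have hA0 : ∀ n, 0 ≤ A n := fun n => Int.emod_nonneg _ (by exact_mod_cast hp0.ne')
  have hA1 : ∀ n, A n < p := fun n => Int.emod_lt_of_pos _ (by exact_mod_cast hp0)
  have hB0 : ∀ n, 0 ≤ B n := fun n => Int.emod_nonneg _ (by exact_mod_cast hq0.ne')
  have hB1 : ∀ n, B n < q := fun n => Int.emod_lt_of_pos _ (by exact_mod_cast hq0)
  have hC0 : ∀ n, 0 ≤ C n := fun n => Int.emod_nonneg _ (by exact_mod_cast hr0.ne')
  have hC1 : ∀ n, C n < r := fun n => Int.emod_lt_of_pos _ (by exact_mod_cast hr0)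
  -- key formula : P * Δ n = P + n - s n
  have hkey : ∀ n : ℕ, P * Δ n = P + n - s n := by
    intro n
    have h1 := Stmt7Aux.ceil_mul n p' p hp0
    have h2 := Stmt7Aux.ceil_mul n q' q hq0
    have h3 := Stmt7Aux.ceil_mul n r' r hr0
    have hΔn := hΔ n
    rw [he0] at hΔn
    simp only [hsdef, hAdef, hBdef, hCdef, hPdef]
    linear_combination P * hΔn - ((q:ℤ)*r) * h1 - ((p:ℤ)*r) * h2 - ((p:ℤ)*q) * h3 - (n:ℤ) * heq
  -- divisibility facts
  have hdp : (p:ℤ) ∣ ((p':ℤ) * q * r + 1) :=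
    ⟨-(e0 * q * r + (q':ℤ) * r + (q:ℤ) * r'), by linear_combination heq⟩
  have hdq : (q:ℤ) ∣ ((q':ℤ) * p * r + 1) :=
    ⟨-(e0 * p * r + (p':ℤ) * r + (p:ℤ) * r'), by linear_combination heq⟩
  have hdr : (r:ℤ) ∣ ((r':ℤ) * p * q + 1) :=
    ⟨-(e0 * p * q + (p':ℤ) * q + (p:ℤ) * q'), by linear_combination heq⟩
  have hAmod : ∀ n : ℕ, (p:ℤ) ∣ (A n + (n:ℤ) * p') := by
    intro n
    refine ⟨-((-((n:ℤ) * p')) / p), ?_⟩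
    have h := Int.mul_ediv_add_emod (-((n:ℤ) * p')) (p:ℤ)
    simp only [hAdef]
    linarith
  have hBmod : ∀ n : ℕ, (q:ℤ) ∣ (B n + (n:ℤ) * q') := by
    intro n
    refine ⟨-((-((n:ℤ) * q')) / q), ?_⟩
    have h := Int.mul_ediv_add_emod (-((n:ℤ) * q')) (q:ℤ)
    simp only [hBdef]
    linarith
  have hCmod : ∀ n : ℕ, (r:ℤ) ∣ (C n + (n:ℤ) * r') := by
    intro n
    refine ⟨-((-((n:ℤ) * r')) / r), ?_⟩
    have h := Int.mul_ediv_add_emod (-((n:ℤ) * r')) (r:ℤ)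
    simp only [hCdef]
    linarith
  have c_pq : IsCoprime (p:ℤ) (q:ℤ) := Nat.isCoprime_iff_coprime.mpr hcopq
  have c_pr : IsCoprime (p:ℤ) (r:ℤ) := Nat.isCoprime_iff_coprime.mpr hcopr
  have c_qr : IsCoprime (q:ℤ) (r:ℤ) := Nat.isCoprime_iff_coprime.mpr hcoqr
  have c_p_qr : IsCoprime (p:ℤ) ((q:ℤ)*r) := c_pq.mul_right c_pr
  have c_q_pr : IsCoprime (q:ℤ) ((p:ℤ)*r) := (c_pq.symm).mul_right c_qr
  have c_r_pq : IsCoprime (r:ℤ) ((p:ℤ)*q) := (c_pr.symm).mul_right (c_qr.symm)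
  have hdvdP : ∀ n : ℕ, P ∣ s n - n := by
    intro n
    have h1 : (p:ℤ) ∣ s n - n := by
      obtain ⟨u, hu⟩ := hAmod n
      obtain ⟨v, hv⟩ := hdp
      exact ⟨u * (q * r) - n * v + B n * r + C n * q, by
        simp only [hsdef]; linear_combination ((q:ℤ)*r) * hu - (n:ℤ) * hv⟩
    have h2 : (q:ℤ) ∣ s n - n := by
      obtain ⟨u, hu⟩ := hBmod n
      obtain ⟨v, hv⟩ := hdq
      exact ⟨u * (p * r) - n * v + A n * r + C n * p, by
        simp only [hsdef]; linear_combination ((p:ℤ)*r) * hu - (n:ℤ) * hv⟩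
    have h3 : (r:ℤ) ∣ s n - n := by
      obtain ⟨u, hu⟩ := hCmod n
      obtain ⟨v, hv⟩ := hdr
      exact ⟨u * (p * q) - n * v + A n * q + B n * p, by
        simp only [hsdef]; linear_combination ((p:ℤ)*q) * hu - (n:ℤ) * hv⟩
    have h12 : (p:ℤ) * q ∣ s n - n := c_pq.mul_dvd h1 h2
    exact (c_pr.mul_left c_qr).mul_dvd h12 h3
  -- bounds on s
  have hs0 : ∀ n, 0 ≤ s n := by
    intro n
    have h1 : 0 ≤ A n * ((q:ℤ)*r) := mul_nonneg (hA0 n) (by positivity)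
    have h2 : 0 ≤ B n * ((p:ℤ)*r) := mul_nonneg (hB0 n) (by positivity)
    have h3 : 0 ≤ C n * ((p:ℤ)*q) := mul_nonneg (hC0 n) (by positivity)
    simp only [hsdef]
    linarith
  have hsle : ∀ n, s n ≤ 3 * P - ((p:ℤ)*q + (p:ℤ)*r + (q:ℤ)*r) := by
    intro n
    have h1 : A n * ((q:ℤ)*r) ≤ ((p:ℤ)-1) * ((q:ℤ)*r) := by
      have hle : A n ≤ (p:ℤ)-1 := by have := hA1 n; omega
      exact mul_le_mul_of_nonneg_right hle (by positivity)
    have h2 : B n * ((p:ℤ)*r) ≤ ((q:ℤ)-1) * ((p:ℤ)*r) := by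
      have hle : B n ≤ (q:ℤ)-1 := by have := hB1 n; omega
      exact mul_le_mul_of_nonneg_right hle (by positivity)
    have h3 : C n * ((p:ℤ)*q) ≤ ((r:ℤ)-1) * ((p:ℤ)*q) := by
      have hle : C n ≤ (r:ℤ)-1 := by have := hC1 n; omega
      exact mul_le_mul_of_nonneg_right hle (by positivity)
    have hring : ((p:ℤ)-1) * ((q:ℤ)*r) + ((q:ℤ)-1) * ((p:ℤ)*r) + ((r:ℤ)-1) * ((p:ℤ)*q)
        = 3 * P - ((p:ℤ)*q + (p:ℤ)*r + (q:ℤ)*r) := by rw [hPdef]; ring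
    simp only [hsdef]
    linarith
  -- the min formula
  have hmin : ∀ n : ℕ, min 0 (Δ n) = if s n = (n:ℤ) + 2 * P then -1 else 0 := by
    intro n
    by_cases h : s n = (n:ℤ) + 2 * P
    · have hP : P * Δ n = P * (-1) := by rw [hkey n, h]; ring
      have hΔn : Δ n = -1 := mul_left_cancel₀ hP0.ne' hP
      rw [hΔn, if_pos h]
      norm_num
    · obtain ⟨m, hm⟩ := hdvdP n
      have hm3 : m < 3 := by
        have h1 := hsle n
        have h2 : (0:ℤ) < (p:ℤ)*q + (p:ℤ)*r + (q:ℤ)*r := by positivity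
        have h3 : P * m < 3 * P := by
          have : (0:ℤ) ≤ (n:ℤ) := by positivity
          linarith
        have h4 : P * m < P * 3 := by linarith
        exact lt_of_mul_lt_mul_left h4 hP0.le
      have hm2 : m ≠ 2 := by
        intro h2
        apply h
        rw [h2] at hm
        linarith
      have hΔn : Δ n = 1 - m := by
        have hP : P * Δ n = P * (1 - m) := by rw [hkey n]; linarith
        exact mul_left_cancel₀ hP0.ne' hP
      have : 0 ≤ Δ n := by omega
      rw [if_neg h]
      exact min_eq_left this
  -- finite support
  have hsupp : (Function.support fun n : ℕ => min 0 (Δ n)) ⊆ ↑(Finset.range (N0 + 1)) := by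
    intro n hn
    simp only [Function.mem_support] at hn
    rw [hmin n] at hn
    by_cases h : s n = (n:ℤ) + 2 * P
    · have h1 := hsle n
      have h2 : (n:ℤ) ≤ (N0:ℤ) := by rw [hN0]; linarith
      have : n ≤ N0 := by exact_mod_cast h2
      simp only [Finset.coe_range, Set.mem_Iio]
      omega
    · rw [if_neg h] at hn; exact absurd rfl hn
  set F : Finset ℕ := (Finset.range (N0 + 1)).filter (fun n => s n = (n:ℤ) + 2 * P) with hFdef
  have hsum : ∑ᶠ n : ℕ, min 0 (Δ n) = -(F.card : ℤ) := by
    rw [finsum_eq_sum_of_support_subset _ hsupp]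
    rw [Finset.sum_congr rfl (fun n _ => hmin n)]
    rw [← Finset.sum_filter (fun n => s n = (n:ℤ) + 2 * P) (fun _ => (-1 : ℤ))]
    rw [Finset.sum_const, ← hFdef]
    simp
  have habs : |∑ᶠ n : ℕ, min 0 (Δ n)| = (F.card : ℤ) := by
    rw [hsum, abs_neg, abs_of_nonneg (by positivity)]
  -- lattice point set
  set Lset : Set (ℕ × ℕ × ℕ) :=
    {t : ℕ × ℕ × ℕ | q * r * t.1 + p * r * t.2.1 + p * q * t.2.2 ≤ N0} with hLdef
  set f : ℕ → ℕ × ℕ × ℕ :=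
    fun n => (p - 1 - (A n).toNat, q - 1 - (B n).toNat, r - 1 - (C n).toNat) with hfdef
  have hxc : ∀ n : ℕ, ((p - 1 - (A n).toNat : ℕ) : ℤ) = (p:ℤ) - 1 - A n := by
    intro n; have := hA0 n; have := hA1 n; omega
  have hyc : ∀ n : ℕ, ((q - 1 - (B n).toNat : ℕ) : ℤ) = (q:ℤ) - 1 - B n := by
    intro n; have := hB0 n; have := hB1 n; omega
  have hzc : ∀ n : ℕ, ((r - 1 - (C n).toNat : ℕ) : ℤ) = (r:ℤ) - 1 - C n := by
    intro n; have := hC0 n; have := hC1 n; omega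
  have hNP : N0 < p * q * r := by
    have h1 : (0:ℤ) < (p:ℤ)*q := by positivity
    have h2 : (0:ℤ) < (q:ℤ)*r := by positivity
    have h3 : (0:ℤ) < (p:ℤ)*r := by positivity
    have : (N0:ℤ) < ((p*q*r : ℕ) : ℤ) := by push_cast; rw [hN0, hPdef]; linarith
    exact_mod_cast this
  have himg : Lset = f '' ↑F := by
    ext t
    simp only [hLdef, Set.mem_setOf_eq, Set.mem_image, Finset.mem_coe, hFdef,
      Finset.mem_filter, Finset.mem_range]
    constructor
    · intro hle
      obtain ⟨x, y, z⟩ := t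
      simp only at hle
      have hxp : x < p := by
        by_contra hc
        push_neg at hc
        have h1 : p * q * r ≤ q * r * x := by
          calc p * q * r = q * r * p := by ring
          _ ≤ q * r * x := Nat.mul_le_mul_left _ hc
        omega
      have hyq : y < q := by
        by_contra hc
        push_neg at hc
        have h1 : p * q * r ≤ p * r * y := by
          calc p * q * r = p * r * q := by ring
          _ ≤ p * r * y := Nat.mul_le_mul_left _ hc
        omega
      have hzr : z < r := by
        by_contra hc
        push_neg at hc
        have h1 : p * q * r ≤ p * q * z := Nat.mul_le_mul_left _ hc
        omega
      set n : ℕ := N0 - (q * r * x + p * r * y + p * q * z) with hndef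
      have hncast : (n:ℤ) = (N0:ℤ) - ((q:ℤ)*r*x + (p:ℤ)*r*y + (p:ℤ)*q*z) := by
        rw [hndef, Nat.cast_sub hle]; push_cast; ring
      have hxZ : (x:ℤ) < p := by exact_mod_cast hxp
      have hyZ : (y:ℤ) < q := by exact_mod_cast hyq
      have hzZ : (z:ℤ) < r := by exact_mod_cast hzr
      have hx0 : (0:ℤ) ≤ x := by positivity
      have hy0 : (0:ℤ) ≤ y := by positivity
      have hz0 : (0:ℤ) ≤ z := by positivity
      have hAn : A n = (p:ℤ) - 1 - x := by
        have hnval : (n:ℤ) = ((p:ℤ)-1-x)*((q:ℤ)*r) - (p:ℤ)*q - (p:ℤ)*r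
            - (p:ℤ)*r*y - (p:ℤ)*q*z := by rw [hncast, hN0, hPdef]; ring
        obtain ⟨v1, hv1⟩ := hdp
        have hw : (p:ℤ) ∣ (((p:ℤ) - 1 - (x:ℤ)) - (-((n:ℤ) * p'))) := by
          apply c_p_qr.dvd_of_dvd_mul_right
          exact ⟨(n:ℤ)*v1 + q + r + r*y + q*z, by linear_combination (n:ℤ)*hv1 - hnval⟩
        have hmod : (-((n:ℤ) * p')) % p = ((p:ℤ) - 1 - x) % p := Int.modEq_iff_dvd.mpr hw
        have hsmall : ((p:ℤ) - 1 - x) % p = (p:ℤ) - 1 - x :=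
          Int.emod_eq_of_lt (by omega) (by omega)
        simp only [hAdef]
        rw [hmod, hsmall]
      have hBn : B n = (q:ℤ) - 1 - y := by
        have hnval : (n:ℤ) = ((q:ℤ)-1-y)*((p:ℤ)*r) - (p:ℤ)*q - (q:ℤ)*r
            - (q:ℤ)*r*x - (p:ℤ)*q*z := by rw [hncast, hN0, hPdef]; ring
        obtain ⟨v2, hv2⟩ := hdq
        have hw : (q:ℤ) ∣ (((q:ℤ) - 1 - (y:ℤ)) - (-((n:ℤ) * q'))) := by
          apply c_q_pr.dvd_of_dvd_mul_right
          exact ⟨(n:ℤ)*v2 + p + r + r*x + p*z, by linear_combination (n:ℤ)*hv2 - hnval⟩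
        have hmod : (-((n:ℤ) * q')) % q = ((q:ℤ) - 1 - y) % q := Int.modEq_iff_dvd.mpr hw
        have hsmall : ((q:ℤ) - 1 - y) % q = (q:ℤ) - 1 - y :=
          Int.emod_eq_of_lt (by omega) (by omega)
        simp only [hBdef]
        rw [hmod, hsmall]
      have hCn : C n = (r:ℤ) - 1 - z := by
        have hnval : (n:ℤ) = ((r:ℤ)-1-z)*((p:ℤ)*q) - (p:ℤ)*r - (q:ℤ)*r
            - (q:ℤ)*r*x - (p:ℤ)*r*y := by rw [hncast, hN0, hPdef]; ring
        obtain ⟨v3, hv3⟩ := hdr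
        have hw : (r:ℤ) ∣ (((r:ℤ) - 1 - (z:ℤ)) - (-((n:ℤ) * r'))) := by
          apply c_r_pq.dvd_of_dvd_mul_right
          exact ⟨(n:ℤ)*v3 + p + q + q*x + p*y, by linear_combination (n:ℤ)*hv3 - hnval⟩
        have hmod : (-((n:ℤ) * r')) % r = ((r:ℤ) - 1 - z) % r := Int.modEq_iff_dvd.mpr hw
        have hsmall : ((r:ℤ) - 1 - z) % r = (r:ℤ) - 1 - z :=
          Int.emod_eq_of_lt (by omega) (by omega)
        simp only [hCdef]
        rw [hmod, hsmall]
      refine ⟨n, ⟨?_, ?_⟩, ?_⟩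
      · rw [hndef]; exact Nat.lt_succ_of_le (Nat.sub_le _ _)
      · simp only [hsdef]
        rw [hAn, hBn, hCn, hncast, hN0, hPdef]
        ring
      · simp only [hfdef, Prod.mk.injEq]
        refine ⟨?_, ?_, ?_⟩ <;> omega
    · rintro ⟨n, ⟨hnr, hns⟩, rfl⟩
      simp only [hsdef] at hns
      have key : ((q * r * (p - 1 - (A n).toNat) + p * r * (q - 1 - (B n).toNat)
          + p * q * (r - 1 - (C n).toNat) : ℕ) : ℤ) = (N0:ℤ) - n := by
        push_cast
        rw [hxc n, hyc n, hzc n]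
        linear_combination -hns - hN0 - 3*hPdef
      have hn0 : (0:ℤ) ≤ (n:ℤ) := by positivity
      have : ((q * r * (p - 1 - (A n).toNat) + p * r * (q - 1 - (B n).toNat)
          + p * q * (r - 1 - (C n).toNat) : ℕ) : ℤ) ≤ (N0:ℤ) := by rw [key]; linarith
      simp only [hfdef]
      exact_mod_cast this
  have hinj : Set.InjOn f ↑F := by
    intro n1 hn1 n2 hn2 hf
    simp only [hfdef, Prod.mk.injEq] at hf
    obtain ⟨h1, h2, h3⟩ := hf
    have hA12 : A n1 = A n2 := by
      have := hA0 n1; have := hA1 n1; have := hA0 n2; have := hA1 n2; omega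
    have hB12 : B n1 = B n2 := by
      have := hB0 n1; have := hB1 n1; have := hB0 n2; have := hB1 n2; omega
    have hC12 : C n1 = C n2 := by
      have := hC0 n1; have := hC1 n1; have := hC0 n2; have := hC1 n2; omega
    simp only [hFdef, Finset.mem_coe, Finset.mem_filter] at hn1 hn2
    have hs12 : s n1 = s n2 := by simp only [hsdef]; rw [hA12, hB12, hC12]
    have : (n1:ℤ) = n2 := by rw [hn1.2, hn2.2] at hs12; linarith
    exact_mod_cast this
  have hL : Lset.ncard = F.card := by
    rw [himg, Set.ncard_image_of_injOn hinj, Set.ncard_coe_finset]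
  -- second description: semigroup elements
  set g : ℕ × ℕ × ℕ → ℕ := fun t => t.1 * (q * r) + t.2.1 * (p * r) + t.2.2 * (p * q) with hgdef
  set Mset : Set ℕ :=
    {n : ℕ | (∃ a b c : ℕ, n = a * (q * r) + b * (p * r) + c * (p * q)) ∧ n ≤ N0} with hMdef
  have hbound : ∀ t : ℕ × ℕ × ℕ, t ∈ Lset → t.1 < p ∧ t.2.1 < q ∧ t.2.2 < r := by
    rintro ⟨x, y, z⟩ ht
    simp only [hLdef, Set.mem_setOf_eq] at ht
    refine ⟨?_, ?_, ?_⟩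
    · by_contra hc
      push_neg at hc
      have h1 : p * q * r ≤ q * r * x := by
        calc p * q * r = q * r * p := by ring
        _ ≤ q * r * x := Nat.mul_le_mul_left _ hc
      omega
    · by_contra hc
      push_neg at hc
      have h1 : p * q * r ≤ p * r * y := by
        calc p * q * r = p * r * q := by ring
        _ ≤ p * r * y := Nat.mul_le_mul_left _ hc
      omega
    · by_contra hc
      push_neg at hc
      have h1 : p * q * r ≤ p * q * z := Nat.mul_le_mul_left _ hc
      omega
  have hMimg : Mset = g '' Lset := by
    ext n
    simp only [hMdef, Set.mem_setOf_eq, Set.mem_image, hLdef, hgdef]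
    constructor
    · rintro ⟨⟨a, b, c, rfl⟩, hle⟩
      refine ⟨(a, b, c), ?_, by ring⟩
      have h1 : q * r * a + p * r * b + p * q * c = a * (q * r) + b * (p * r) + c * (p * q) := by
        ring
      simp only [h1]
      exact hle
    · rintro ⟨⟨x, y, z⟩, ht, rfl⟩
      simp only at ht ⊢
      constructor
      · exact ⟨x, y, z, rfl⟩
      · have h1 : x * (q * r) + y * (p * r) + z * (p * q)
            = q * r * x + p * r * y + p * q * z := by ring
        omega
  have hginj : Set.InjOn g Lset := by
    rintro ⟨x1, y1, z1⟩ h1 ⟨x2, y2, z2⟩ h2 hg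
    obtain ⟨hx1, hy1, hz1⟩ := hbound _ h1
    obtain ⟨hx2, hy2, hz2⟩ := hbound _ h2
    have a1 : (x1:ℤ) < p := by exact_mod_cast hx1
    have a2 : (x2:ℤ) < p := by exact_mod_cast hx2
    have b1 : (y1:ℤ) < q := by exact_mod_cast hy1
    have b2 : (y2:ℤ) < q := by exact_mod_cast hy2
    have c1 : (z1:ℤ) < r := by exact_mod_cast hz1
    have c2 : (z2:ℤ) < r := by exact_mod_cast hz2
    simp only [hgdef] at hg
    have hgZ : (x1:ℤ) * ((q:ℤ) * r) + (y1:ℤ) * ((p:ℤ) * r) + (z1:ℤ) * ((p:ℤ) * q)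
        = (x2:ℤ) * ((q:ℤ) * r) + (y2:ℤ) * ((p:ℤ) * r) + (z2:ℤ) * ((p:ℤ) * q) := by
      exact_mod_cast hg
    have hx : x1 = x2 := by
      have hd : (p:ℤ) ∣ ((x1:ℤ) - x2) := by
        apply c_p_qr.dvd_of_dvd_mul_right
        exact ⟨(r:ℤ) * y2 + (q:ℤ) * z2 - (r:ℤ) * y1 - (q:ℤ) * z1, by linear_combination hgZ⟩
      have h0 := Stmt7Aux.dvd_small_eq_zero hd (by omega) (by omega)
      omega
    subst hx
    have hy : y1 = y2 := by
      have hd : (q:ℤ) ∣ ((y1:ℤ) - y2) := by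
        apply c_q_pr.dvd_of_dvd_mul_right
        exact ⟨(p:ℤ) * z2 - (p:ℤ) * z1, by linear_combination hgZ⟩
      have h0 := Stmt7Aux.dvd_small_eq_zero hd (by omega) (by omega)
      omega
    subst hy
    have hz : z1 = z2 := by
      have hpq0 : ((p:ℤ) * q) ≠ 0 := by positivity
      have h0 : (z1:ℤ) * ((p:ℤ) * q) = (z2:ℤ) * ((p:ℤ) * q) := by linarith
      have := mul_right_cancel₀ hpq0 h0
      omega
    subst hz
    rfl
  have hM : Mset.ncard = F.card := by
    rw [hMimg, Set.ncard_image_of_injOn hginj, hL]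
  exact ⟨by rw [habs, hL], by rw [habs, hM]⟩
end

section
/- Let (p₁,q₁,r₁) and (p₂,q₂,r₂) be triples of pairwise coprime integers with 1 < pᵢ < qᵢ < rᵢ (i = 1,2). If p₁ ≥ p₂, q₁ ≥ q₂ and r₁ ≥ r₂, then κ(p₁,q₁,r₁) ≥ κ(p₂,q₂,r₂). -/
/-!
Let `x(n) ∈ (0, p]` be the representative of `n p'` modulo `p`, and `y(n)`, `z(n)` likewise.
The relation `e₀pqr + p'qr + pq'r + pqr' = -1` turns the definition of `Δ` into
`pqr · Δ(n) = n + x(n) qr + y(n) pr + z(n) pq - 2pqr`.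
Hence `Δ(n) ≥ -1`, and `Δ(n) = -1` exactly when `n = pqr - (x qr + y pr + z pq)` for the lattice
point `(x, y, z) = (x(n), y(n), z(n))` of the open tetrahedron `x, y, z > 0`,
`x/p + y/q + z/r < 1`. Conversely such an `n` gives back `x = x(n)` because `p'qr ≡ -1 (mod p)`,
so `κ(p, q, r)` is the number of lattice points of this tetrahedron, which grows with `p, q, r`.
-/

open Finset

/-- The representative of `m` modulo `a` in `(0, a]`. -/
def ceilRem (m a : ℤ) : ℤ := m - a * (⌈(m : ℚ) / a⌉ - 1)

section CeilRem

variable {m a : ℤ}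

theorem ceilRem_pos (ha : 0 < a) : 0 < ceilRem m a := by
  have h : ((⌈(m : ℚ) / a⌉ - 1 : ℤ) : ℚ) * a < m :=
    (lt_div_iff₀ (by exact_mod_cast ha)).mp (Int.lt_ceil.mp (sub_one_lt _))
  have : (⌈(m : ℚ) / a⌉ - 1) * a < m := by exact_mod_cast h
  unfold ceilRem
  linarith

theorem ceilRem_eq {y : ℤ} (hy₀ : 0 < y) (hya : y ≤ a) (hdvd : a ∣ m - y) :
    ceilRem m a = y := by
  obtain ⟨k, hk⟩ := hdvd
  have ha : (0 : ℚ) < a := by exact_mod_cast hy₀.trans_le hya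
  have hm : (m : ℚ) / a = k + y / a := by
    rw [show m = a * k + y by linarith]
    push_cast
    field_simp
  have hceil : ⌈(m : ℚ) / a⌉ = k + 1 := by
    have : (0 : ℚ) < y / a := div_pos (by exact_mod_cast hy₀) ha
    have : (y : ℚ) / a ≤ 1 := (div_le_one ha).mpr (by exact_mod_cast hya)
    rw [Int.ceil_eq_iff, hm]
    push_cast
    constructor <;> linarith
  rw [ceilRem, hceil]
  linarith

end CeilRem

def tetraWeight (p q r : ℕ) (t : ℕ × ℕ × ℕ) : ℕ := t.1 * q * r + t.2.1 * p * r + t.2.2 * p * q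

def tetraPoints (p q r : ℕ) : Finset (ℕ × ℕ × ℕ) :=
  {t ∈ Ioo 0 p ×ˢ Ioo 0 q ×ˢ Ioo 0 r | tetraWeight p q r t < p * q * r}

section Tetrahedron

variable {p q r : ℕ}

theorem mem_tetraPoints {x y z : ℕ} :
    (x, y, z) ∈ tetraPoints p q r ↔
      (0 < x ∧ x < p) ∧ (0 < y ∧ y < q) ∧ (0 < z ∧ z < r) ∧
        x * q * r + y * p * r + z * p * q < p * q * r := by
  rw [tetraPoints, Finset.mem_filter]
  simp only [Finset.mem_product, Finset.mem_Ioo, tetraWeight, and_assoc]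

theorem sub_tetraWeight_add_tetraWeight {t : ℕ × ℕ × ℕ} (ht : t ∈ tetraPoints p q r) :
    p * q * r - tetraWeight p q r t + tetraWeight p q r t = p * q * r :=
  Nat.sub_add_cancel (Finset.mem_filter.mp ht).2.le

theorem mem_tetraPoints_of_add_eq {n x y z : ℕ} (hn : 0 < n) (hx : 0 < x) (hy : 0 < y)
    (hz : 0 < z) (h : n + tetraWeight p q r (x, y, z) = p * q * r) :
    (x, y, z) ∈ tetraPoints p q r := by
  simp only [tetraWeight] at h
  rw [mem_tetraPoints]
  refine ⟨⟨hx, ?_⟩, ⟨hy, ?_⟩, ⟨hz, ?_⟩, by omega⟩ <;> by_contra! hle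
  · linarith [Nat.mul_le_mul_right (q * r) hle, Nat.zero_le (y * p * r), Nat.zero_le (z * p * q)]
  · linarith [Nat.mul_le_mul_right (p * r) hle, Nat.zero_le (x * q * r), Nat.zero_le (z * p * q)]
  · linarith [Nat.mul_le_mul_right (p * q) hle, Nat.zero_le (x * q * r), Nat.zero_le (y * p * r)]

theorem weight_lt_iff_div_add_div_add_div_lt_one (hp : 0 < p) (hq : 0 < q) (hr : 0 < r)
    (x y z : ℕ) :
    x * q * r + y * p * r + z * p * q < p * q * r ↔ (x / p + y / q + z / r : ℚ) < 1 := by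
  have h : (x / p + y / q + z / r : ℚ) =
      ((x * q * r + y * p * r + z * p * q : ℕ) : ℚ) / (p * q * r : ℕ) := by
    push_cast
    field_simp
  rw [h, div_lt_one (by positivity)]
  exact_mod_cast Iff.rfl

theorem tetraPoints_mono {p₁ q₁ r₁ p₂ q₂ r₂ : ℕ} (hp : p₂ ≤ p₁) (hq : q₂ ≤ q₁) (hr : r₂ ≤ r₁) :
    tetraPoints p₂ q₂ r₂ ⊆ tetraPoints p₁ q₁ r₁ := by
  rintro ⟨x, y, z⟩ ht
  rw [mem_tetraPoints] at ht ⊢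
  obtain ⟨⟨hx, hxp⟩, ⟨hy, hyq⟩, ⟨hz, hzr⟩, hlt⟩ := ht
  refine ⟨⟨hx, hxp.trans_le hp⟩, ⟨hy, hyq.trans_le hq⟩, ⟨hz, hzr.trans_le hr⟩, ?_⟩
  rw [weight_lt_iff_div_add_div_add_div_lt_one (by omega) (by omega) (by omega)] at hlt ⊢
  calc (x / p₁ + y / q₁ + z / r₁ : ℚ) ≤ x / p₂ + y / q₂ + z / r₂ := by
        gcongr <;> first | positivity | (norm_cast; omega)
    _ < 1 := hlt

end Tetrahedron

def seifertDelta (e : ℤ) (p q r p' q' r' : ℕ) (n : ℕ) : ℤ :=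
  1 + |e| * n - ⌈(n * p' : ℚ) / p⌉ - ⌈(n * q' : ℚ) / q⌉ - ⌈(n * r' : ℚ) / r⌉

def SeifertRelation (e : ℤ) (p q r p' q' r' : ℕ) : Prop :=
  e * (p * q * r : ℤ) + (p' : ℤ) * q * r + (p : ℤ) * q' * r + (p : ℤ) * q * r' = -1

namespace SeifertRelation

variable {e : ℤ} {p q r p' q' r' : ℕ}

theorem pos (h : SeifertRelation e p q r p' q' r') : 0 < p ∧ 0 < q ∧ 0 < r := by
  unfold SeifertRelation at h
  refine ⟨Nat.pos_of_ne_zero ?_, Nat.pos_of_ne_zero ?_, Nat.pos_of_ne_zero ?_⟩ <;> rintro rfl <;>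
    simp only [Nat.cast_zero, zero_mul, mul_zero, add_zero, zero_add] at h
  · linarith [show (0 : ℤ) ≤ p' * q * r by positivity]
  · linarith [show (0 : ℤ) ≤ p * q' * r by positivity]
  · linarith [show (0 : ℤ) ≤ p * q * r' by positivity]

theorem e_neg (h : SeifertRelation e p q r p' q' r') : e < 0 := by
  obtain ⟨hp, hq, hr⟩ := h.pos
  have : e * (p * q * r : ℤ) < 0 := by
    unfold SeifertRelation at h
    linarith [show (0 : ℤ) ≤ p' * q * r + p * q' * r + p * q * r' by positivity]
  exact neg_of_mul_neg_left this (by positivity)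

theorem mul_seifertDelta (h : SeifertRelation e p q r p' q' r') (n : ℕ) :
    (p * q * r : ℤ) * seifertDelta e p q r p' q' r' n =
      n + ceilRem (n * p') p * (q * r) + ceilRem (n * q') q * (p * r)
        + ceilRem (n * r') r * (p * q) - 2 * (p * q * r) := by
  rw [seifertDelta, abs_of_neg h.e_neg]
  unfold SeifertRelation at h
  unfold ceilRem
  push_cast
  linear_combination (-(n : ℤ)) * h

theorem neg_one_le_seifertDelta (h : SeifertRelation e p q r p' q' r') (n : ℕ) :
    -1 ≤ seifertDelta e p q r p' q' r' n := by
  obtain ⟨hp, hq, hr⟩ := h.pos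
  have hX := mul_pos (ceilRem_pos (m := n * p') (Int.natCast_pos.mpr hp))
    (by positivity : (0 : ℤ) < q * r)
  have hY := mul_pos (ceilRem_pos (m := n * q') (Int.natCast_pos.mpr hq))
    (by positivity : (0 : ℤ) < p * r)
  have hZ := mul_pos (ceilRem_pos (m := n * r') (Int.natCast_pos.mpr hr))
    (by positivity : (0 : ℤ) < p * q)
  have : (p * q * r : ℤ) * (-2) < p * q * r * seifertDelta e p q r p' q' r' n := by
    rw [h.mul_seifertDelta]
    linarith [Int.natCast_nonneg n]
  have := lt_of_mul_lt_mul_left this (by positivity)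
  omega

theorem ceilRem_eq_of_add_eq (h : SeifertRelation e p q r p' q' r') {n x y z : ℕ}
    (hx : 0 < x) (hy : 0 < y) (hz : 0 < z) (hxp : x ≤ p) (hyq : y ≤ q) (hzr : z ≤ r)
    (hn : n + tetraWeight p q r (x, y, z) = p * q * r) :
    ceilRem (n * p') p = x ∧ ceilRem (n * q') q = y ∧ ceilRem (n * r') r = z := by
  unfold SeifertRelation at h
  simp only [tetraWeight] at hn
  have hn : (n : ℤ) + (x * q * r + y * p * r + z * p * q) = p * q * r := by exact_mod_cast hn
  refine ⟨ceilRem_eq (by omega) (by omega) ?_, ceilRem_eq (by omega) (by omega) ?_,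
    ceilRem_eq (by omega) (by omega) ?_⟩
  -- `n p' ≡ -x q r p' ≡ x (mod p)`, since `p' q r + 1 = -p (e q r + q' r + q r')`
  · exact ⟨p' * (q * r - y * r - z * q) + x * (e * q * r + q' * r + q * r'),
      by linear_combination (p' : ℤ) * hn - (x : ℤ) * h⟩
  · exact ⟨q' * (p * r - x * r - z * p) + y * (e * p * r + p' * r + p * r'),
      by linear_combination (q' : ℤ) * hn - (y : ℤ) * h⟩
  · exact ⟨r' * (p * q - x * q - y * p) + z * (e * p * q + p' * q + p * q'),
      by linear_combination (r' : ℤ) * hn - (z : ℤ) * h⟩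

theorem ceilRem_sub_tetraWeight (h : SeifertRelation e p q r p' q' r') {x y z : ℕ}
    (ht : (x, y, z) ∈ tetraPoints p q r) :
    let n := p * q * r - tetraWeight p q r (x, y, z)
    ceilRem (n * p') p = x ∧ ceilRem (n * q') q = y ∧ ceilRem (n * r') r = z := by
  obtain ⟨⟨hx, hxp⟩, ⟨hy, hyq⟩, ⟨hz, hzr⟩, -⟩ := mem_tetraPoints.mp ht
  exact h.ceilRem_eq_of_add_eq hx hy hz hxp.le hyq.le hzr.le (sub_tetraWeight_add_tetraWeight ht)

theorem seifertDelta_sub_tetraWeight (h : SeifertRelation e p q r p' q' r') {x y z : ℕ}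
    (ht : (x, y, z) ∈ tetraPoints p q r) :
    seifertDelta e p q r p' q' r' (p * q * r - tetraWeight p q r (x, y, z)) = -1 := by
  obtain ⟨hp, hq, hr⟩ := h.pos
  have hn : ((p * q * r - tetraWeight p q r (x, y, z) : ℕ) : ℤ)
      + (x * q * r + y * p * r + z * p * q) = p * q * r := by
    have := sub_tetraWeight_add_tetraWeight ht
    simp only [tetraWeight] at this
    exact_mod_cast this
  have key := h.mul_seifertDelta (p * q * r - tetraWeight p q r (x, y, z))
  obtain ⟨hX, hY, hZ⟩ := h.ceilRem_sub_tetraWeight ht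
  rw [hX, hY, hZ] at key
  refine mul_left_cancel₀ (by positivity : (p * q * r : ℤ) ≠ 0) ?_
  linarith

theorem injOn_sub_tetraWeight (h : SeifertRelation e p q r p' q' r') :
    Set.InjOn (fun t => p * q * r - tetraWeight p q r t) (tetraPoints p q r) := by
  rintro ⟨x, y, z⟩ ht ⟨x', y', z'⟩ ht' heq
  obtain ⟨hX, hY, hZ⟩ := h.ceilRem_sub_tetraWeight ht
  obtain ⟨hX', hY', hZ'⟩ := h.ceilRem_sub_tetraWeight ht'
  simp only at heq hX hY hZ hX' hY' hZ'
  rw [heq] at hX hY hZ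
  simp only [Prod.mk.injEq]
  omega

theorem exists_sub_tetraWeight_eq (h : SeifertRelation e p q r p' q' r') {n : ℕ}
    (hn : seifertDelta e p q r p' q' r' n < 0) :
    ∃ t ∈ tetraPoints p q r, p * q * r - tetraWeight p q r t = n := by
  obtain ⟨hp, hq, hr⟩ := h.pos
  have hn0 : n ≠ 0 := by
    rintro rfl
    simp [seifertDelta] at hn
  have key := h.mul_seifertDelta n
  rw [le_antisymm (by omega) (h.neg_one_le_seifertDelta n)] at key
  have hx := ceilRem_pos (m := n * p') (Int.natCast_pos.mpr hp)
  have hy := ceilRem_pos (m := n * q') (Int.natCast_pos.mpr hq)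
  have hz := ceilRem_pos (m := n * r') (Int.natCast_pos.mpr hr)
  lift ceilRem (n * p') p to ℕ using hx.le with x
  lift ceilRem (n * q') q to ℕ using hy.le with y
  lift ceilRem (n * r') r to ℕ using hz.le with z
  have hsum : n + tetraWeight p q r (x, y, z) = p * q * r := by
    simp only [tetraWeight]
    exact_mod_cast (by linarith : (n : ℤ) + (x * q * r + y * p * r + z * p * q) = p * q * r)
  exact ⟨(x, y, z), mem_tetraPoints_of_add_eq (Nat.pos_of_ne_zero hn0) (by omega) (by omega)
    (by omega) hsum, by omega⟩

theorem abs_finsum_min_seifertDelta (h : SeifertRelation e p q r p' q' r') :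
    |∑ᶠ n, min 0 (seifertDelta e p q r p' q' r' n)| = #(tetraPoints p q r) := by
  have hsupp : Function.support (fun n => min 0 (seifertDelta e p q r p' q' r' n)) ⊆
      (tetraPoints p q r).image (fun t => p * q * r - tetraWeight p q r t) := by
    intro n hn
    have hneg : seifertDelta e p q r p' q' r' n < 0 := by
      by_contra! h0
      exact hn (min_eq_left h0)
    obtain ⟨t, ht, rfl⟩ := h.exists_sub_tetraWeight_eq hneg
    exact mem_image_of_mem _ ht
  rw [finsum_eq_sum_of_support_subset _ hsupp, sum_image h.injOn_sub_tetraWeight,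
    sum_congr rfl fun t ht => by rw [h.seifertDelta_sub_tetraWeight ht]]
  simp

end SeifertRelation

theorem stmt_8_general (p₁ q₁ r₁ p₂ q₂ r₂ : ℕ)
    (e₁ : ℤ) (p₁' q₁' r₁' : ℕ)
    (heq₁ : e₁ * (p₁ * q₁ * r₁ : ℤ) + (p₁' : ℤ) * q₁ * r₁ + (p₁ : ℤ) * q₁' * r₁
      + (p₁ : ℤ) * q₁ * r₁' = -1)
    (e₂ : ℤ) (p₂' q₂' r₂' : ℕ)
    (heq₂ : e₂ * (p₂ * q₂ * r₂ : ℤ) + (p₂' : ℤ) * q₂ * r₂ + (p₂ : ℤ) * q₂' * r₂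
      + (p₂ : ℤ) * q₂ * r₂' = -1)
    (Δ₁ Δ₂ : ℕ → ℤ)
    (hΔ₁ : ∀ n : ℕ, Δ₁ n =
      1 + |e₁| * n - ⌈(n * p₁' : ℚ) / p₁⌉ - ⌈(n * q₁' : ℚ) / q₁⌉ - ⌈(n * r₁' : ℚ) / r₁⌉)
    (hΔ₂ : ∀ n : ℕ, Δ₂ n =
      1 + |e₂| * n - ⌈(n * p₂' : ℚ) / p₂⌉ - ⌈(n * q₂' : ℚ) / q₂⌉ - ⌈(n * r₂' : ℚ) / r₂⌉)
    (hge : p₂ ≤ p₁ ∧ q₂ ≤ q₁ ∧ r₂ ≤ r₁) :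
    |∑ᶠ n : ℕ, min 0 (Δ₂ n)| ≤ |∑ᶠ n : ℕ, min 0 (Δ₁ n)| := by
  obtain rfl : Δ₁ = seifertDelta e₁ p₁ q₁ r₁ p₁' q₁' r₁' := funext hΔ₁
  obtain rfl : Δ₂ = seifertDelta e₂ p₂ q₂ r₂ p₂' q₂' r₂' := funext hΔ₂
  rw [SeifertRelation.abs_finsum_min_seifertDelta heq₁,
    SeifertRelation.abs_finsum_min_seifertDelta heq₂]
  exact_mod_cast card_le_card (tetraPoints_mono hge.1 hge.2.1 hge.2.2)

/-- Monotonicity of `κ` on triples: if `(p₁,q₁,r₁) ≥ (p₂,q₂,r₂)` componentwise, then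
`κ(p₁,q₁,r₁) ≥ κ(p₂,q₂,r₂)`. -/
theorem stmt_8 (p₁ q₁ r₁ p₂ q₂ r₂ : ℕ)
    (hp₁ : 1 < p₁) (hpq₁ : p₁ < q₁) (hqr₁ : q₁ < r₁)
    (hcopq₁ : Nat.Coprime p₁ q₁) (hcopr₁ : Nat.Coprime p₁ r₁) (hcoqr₁ : Nat.Coprime q₁ r₁)
    (hp₂ : 1 < p₂) (hpq₂ : p₂ < q₂) (hqr₂ : q₂ < r₂)
    (hcopq₂ : Nat.Coprime p₂ q₂) (hcopr₂ : Nat.Coprime p₂ r₂) (hcoqr₂ : Nat.Coprime q₂ r₂)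
    (e₁ : ℤ) (p₁' q₁' r₁' : ℕ)
    (hp₁' : p₁' ≤ p₁ - 1) (hq₁' : q₁' ≤ q₁ - 1) (hr₁' : r₁' ≤ r₁ - 1)
    (heq₁ : e₁ * (p₁ * q₁ * r₁ : ℤ) + (p₁' : ℤ) * q₁ * r₁ + (p₁ : ℤ) * q₁' * r₁
      + (p₁ : ℤ) * q₁ * r₁' = -1)
    (e₂ : ℤ) (p₂' q₂' r₂' : ℕ)
    (hp₂' : p₂' ≤ p₂ - 1) (hq₂' : q₂' ≤ q₂ - 1) (hr₂' : r₂' ≤ r₂ - 1)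
    (heq₂ : e₂ * (p₂ * q₂ * r₂ : ℤ) + (p₂' : ℤ) * q₂ * r₂ + (p₂ : ℤ) * q₂' * r₂
      + (p₂ : ℤ) * q₂ * r₂' = -1)
    (Δ₁ Δ₂ : ℕ → ℤ)
    (hΔ₁ : ∀ n : ℕ, Δ₁ n =
      1 + |e₁| * n - ⌈(n * p₁' : ℚ) / p₁⌉ - ⌈(n * q₁' : ℚ) / q₁⌉ - ⌈(n * r₁' : ℚ) / r₁⌉)
    (hΔ₂ : ∀ n : ℕ, Δ₂ n =
      1 + |e₂| * n - ⌈(n * p₂' : ℚ) / p₂⌉ - ⌈(n * q₂' : ℚ) / q₂⌉ - ⌈(n * r₂' : ℚ) / r₂⌉)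
    (hge : p₂ ≤ p₁ ∧ q₂ ≤ q₁ ∧ r₂ ≤ r₁) :
    |∑ᶠ n : ℕ, min 0 (Δ₂ n)| ≤ |∑ᶠ n : ℕ, min 0 (Δ₁ n)| :=
  stmt_8_general p₁ q₁ r₁ p₂ q₂ r₂ e₁ p₁' q₁' r₁' heq₁ e₂ p₂' q₂' r₂' heq₂ Δ₁ Δ₂ hΔ₁ hΔ₂ hge
end

section
/- Let l ≥ 4 and (p₁, …, p_l) be as in the context. If x₁, …, x_l ∈ ℕ and n = Σᵢ xᵢ·(P/pᵢ), then Δ(n) = 1 + Σᵢ ⌊xᵢ/pᵢ⌋. -/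
/-!
Dividing the defining identity of `e₀` by `P` gives `|e₀| = 1/P + Σᵢ pᵢ'/pᵢ`, and `n/P = Σᵢ xᵢ/pᵢ`,
so `Δ(n) = 1 + Σᵢ (xᵢ/pᵢ - (⌈n pᵢ'/pᵢ⌉ - n pᵢ'/pᵢ))`. Modulo `pᵢ` we have `(P/pᵢ) pᵢ' ≡ -1` and
`n ≡ xᵢ (P/pᵢ)`, hence `pᵢ ∣ n pᵢ' + xᵢ`: the rationals `-n pᵢ'/pᵢ` and `xᵢ/pᵢ` have the same
fractional part, so `⌈n pᵢ'/pᵢ⌉ - n pᵢ'/pᵢ = fract (xᵢ/pᵢ)` and the `i`-th summand is `⌊xᵢ/pᵢ⌋`.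
-/

open Finset

section ProdErase

variable {ι : Type*} [DecidableEq ι] {s : Finset ι} {i : ι}

theorem dvd_sum_mul_prod_erase_sub {R : Type*} [CommRing R] (p a : ι → R) (hi : i ∈ s) :
    p i ∣ ∑ j ∈ s, a j * ∏ k ∈ s.erase j, p k - a i * ∏ k ∈ s.erase i, p k := by
  rw [← add_sum_erase s _ hi, add_sub_cancel_left]
  exact dvd_sum fun j hj =>
    (dvd_prod_of_mem p (mem_erase.2 ⟨(ne_of_mem_erase hj).symm, hi⟩)).mul_left _

theorem dvd_mul_add_of_add_sum_mul_prod_erase_eq_neg_one {R : Type*} [CommRing R] {p a b : ι → R}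
    {e n : R}
    (hi : i ∈ s) (he : e * ∏ j ∈ s, p j + ∑ j ∈ s, b j * ∏ k ∈ s.erase j, p k = -1)
    (hn : n = ∑ j ∈ s, a j * ∏ k ∈ s.erase j, p k) :
    p i ∣ n * b i + a i := by
  have hna : p i ∣ n - a i * ∏ k ∈ s.erase i, p k := hn ▸ dvd_sum_mul_prod_erase_sub p a hi
  have hb : p i ∣ b i * ∏ k ∈ s.erase i, p k + 1 := by
    have hP : p i ∣ e * ∏ j ∈ s, p j := (dvd_prod_of_mem p hi).mul_left e
    have hsplit : b i * ∏ k ∈ s.erase i, p k + 1 = -(e * ∏ j ∈ s, p j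
        + (∑ j ∈ s, b j * ∏ k ∈ s.erase j, p k - b i * ∏ k ∈ s.erase i, p k)) := by
      linear_combination he
    rw [hsplit, dvd_neg]
    exact dvd_add hP (dvd_sum_mul_prod_erase_sub p b hi)
  have hsplit : n * b i + a i
      = (n - a i * ∏ k ∈ s.erase i, p k) * b i + a i * (b i * ∏ k ∈ s.erase i, p k + 1) := by
    ring
  rw [hsplit]
  exact dvd_add (hna.mul_right _) (hb.mul_left _)

theorem sum_mul_prod_erase_div_prod {K : Type*} [Field K] {p : ι → K} (hp : ∀ i ∈ s, p i ≠ 0)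
    (a : ι → K) : (∑ i ∈ s, a i * ∏ j ∈ s.erase i, p j) / ∏ j ∈ s, p j = ∑ i ∈ s, a i / p i := by
  rw [sum_div]
  refine sum_congr rfl fun i hi => ?_
  rw [← mul_prod_erase s p hi,
    mul_div_mul_right _ _ (prod_ne_zero_iff.2 fun j hj => hp j (mem_of_mem_erase hj))]

end ProdErase

theorem Int.ceil_sub_self_eq_fract_of_add_eq {R : Type*} [Ring R] [LinearOrder R]
    [IsStrictOrderedRing R] [FloorRing R] {a b : R} {z : ℤ} (h : a + b = z) :
    ⌈a⌉ - a = Int.fract b := by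
  have hfract : Int.fract (-a) = Int.fract b :=
    Int.fract_eq_fract.2 ⟨-z, by rw [Int.cast_neg, ← h]; abel⟩
  rw [← hfract, Int.fract, Int.floor_neg, Int.cast_neg]
  abel

theorem abs_eq_one_div_prod_add_sum_div {ι : Type*} [Fintype ι] [DecidableEq ι] {p : ι → ℕ}
    (hp : ∀ i, p i ≠ 0) {e : ℤ} {b : ι → ℕ}
    (he : e * ∏ i, (p i : ℤ) + ∑ i, (∏ j ∈ univ.erase i, (p j : ℤ)) * (b i : ℤ) = -1) :
    |(e : ℚ)| = 1 / ∏ i, (p i : ℚ) + ∑ i, (b i : ℚ) / p i := by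
  have hp0 : ∀ i ∈ univ, (p i : ℚ) ≠ 0 := fun i _ => Nat.cast_ne_zero.2 (hp i)
  have hP : 0 < ∏ i, (p i : ℚ) := prod_pos fun i _ => Nat.cast_pos.2 (Nat.pos_of_ne_zero (hp i))
  have h := congrArg (fun z : ℤ => (z : ℚ) / ∏ i, (p i : ℚ)) he
  simp only [Int.cast_add, Int.cast_mul, Int.cast_sum, Int.cast_prod, Int.cast_natCast,
    Int.cast_neg, Int.cast_one, mul_comm (∏ j ∈ univ.erase _, (p j : ℚ))] at h
  rw [add_div, mul_div_cancel_right₀ _ hP.ne', sum_mul_prod_erase_div_prod hp0, neg_div] at h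
  have hb : 0 ≤ ∑ i, (b i : ℚ) / p i := by positivity
  rw [abs_of_neg (by linarith [one_div_pos.2 hP])]
  linarith

theorem ceil_mul_div_sub_self_eq_fract {n b x d : ℕ} (hd : d ≠ 0) (hdvd : (d : ℤ) ∣ n * b + x) :
    (⌈(n * b : ℚ) / d⌉ : ℚ) - (n * b : ℚ) / d = Int.fract ((x : ℚ) / d) :=
  Int.ceil_sub_self_eq_fract_of_add_eq (z := (n * b + x : ℤ) / d) (by
    rw [Int.cast_div hdvd (by exact_mod_cast hd)]
    push_cast
    ring)

theorem stmt_11_general (l : ℕ) (p : Fin l → ℕ)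
    (hp1 : ∀ i, 1 < p i)
    (e0 : ℤ) (p' : Fin l → ℕ)
    (heq : e0 * ∏ i, (p i : ℤ)
      + ∑ i, (∏ j ∈ Finset.univ.erase i, (p j : ℤ)) * (p' i : ℤ) = -1)
    (Δ : ℕ → ℤ)
    (hΔ : ∀ n : ℕ, Δ n = 1 + |e0| * n - ∑ i, ⌈(n * p' i : ℚ) / p i⌉)
    (x : Fin l → ℕ) (n : ℕ)
    (hn : n = ∑ i, x i * ∏ j ∈ Finset.univ.erase i, p j) :
    Δ n = 1 + ∑ i, ((x i / p i : ℕ) : ℤ) := by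
  have hp : ∀ i, p i ≠ 0 := fun i => (zero_lt_one.trans (hp1 i)).ne'
  have hn' : (n : ℚ) / ∏ i, (p i : ℚ) = ∑ i, (x i : ℚ) / p i := by
    rw [hn]
    push_cast
    exact sum_mul_prod_erase_div_prod (fun i _ => Nat.cast_ne_zero.2 (hp i)) _
  have hfract : ∀ i, (⌈(n * p' i : ℚ) / p i⌉ : ℚ) - (n * p' i : ℚ) / p i
      = Int.fract ((x i : ℚ) / p i) := fun i =>
    ceil_mul_div_sub_self_eq_fract (hp i) <|
      dvd_mul_add_of_add_sum_mul_prod_erase_eq_neg_one (n := (n : ℤ)) (a := fun i => (x i : ℤ))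
        (mem_univ i) (by simpa only [mul_comm (∏ j ∈ univ.erase _, _)] using heq)
        (by rw [hn]; push_cast; rfl)
  have habs : |(e0 : ℚ)| * n = ∑ i, ((x i : ℚ) / p i + (n * p' i : ℚ) / p i) := by
    rw [abs_eq_one_div_prod_add_sum_div hp heq, add_mul, sum_mul, one_div_mul_eq_div, hn',
      ← sum_add_distrib]
    exact sum_congr rfl fun i _ => by ring
  rw [hΔ]
  apply Int.cast_injective (α := ℚ)
  push_cast
  rw [habs, add_sub_assoc, ← sum_sub_distrib]
  congr 1
  refine sum_congr rfl fun i _ => ?_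
  rw [← Rat.floor_natCast_div_natCast, ← Int.self_sub_fract, ← hfract i]
  ring

/-- For `l ≥ 4`: if `n = Σᵢ xᵢ·(P/pᵢ)` with `xᵢ ∈ ℕ`, then `Δ(n) = 1 + Σᵢ ⌊xᵢ/pᵢ⌋`. -/
theorem stmt_11 (l : ℕ) (hl : 4 ≤ l) (p : Fin l → ℕ)
    (hp1 : ∀ i, 1 < p i) (hmono : StrictMono p)
    (hcop : ∀ i j, i ≠ j → Nat.Coprime (p i) (p j))
    (e0 : ℤ) (p' : Fin l → ℕ) (hp' : ∀ i, p' i ≤ p i - 1)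
    (heq : e0 * ∏ i, (p i : ℤ)
      + ∑ i, (∏ j ∈ Finset.univ.erase i, (p j : ℤ)) * (p' i : ℤ) = -1)
    (Δ : ℕ → ℤ)
    (hΔ : ∀ n : ℕ, Δ n = 1 + |e0| * n - ∑ i, ⌈(n * p' i : ℚ) / p i⌉)
    (x : Fin l → ℕ) (n : ℕ)
    (hn : n = ∑ i, x i * ∏ j ∈ Finset.univ.erase i, p j) :
    Δ n = 1 + ∑ i, ((x i / p i : ℕ) : ℤ) :=
  stmt_11_general l p hp1 e0 p' heq Δ hΔ x n hn
end

section
/- Let l ≥ 3 and (p₁, …, p_l) be as in the context. Then κ(p₁, …, p_l) = Σ_{j=1}^{l−2} ((l−j−1)·(l−j)/2) · A_j, where for each k ∈ {1, …, l−2}, N₀(k) = P·(k − Σᵢ 1/pᵢ) and A_k is the number of lattice points (x₁, …, x_l) ∈ ℤ^l with 0 ≤ xᵢ ≤ pᵢ − 1 for all i and N₀(k−1) < Σᵢ xᵢ·(P/pᵢ) ≤ N₀(k). -/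
/-!
Write `P = ∏ pᵢ`, `Qᵢ = P / pᵢ` and let `sᵢ(n) ∈ [0, pᵢ)` be the round-up defect
`pᵢ⌈n p'ᵢ / pᵢ⌉ - n p'ᵢ`. The relation `e₀P + Σ Qᵢp'ᵢ = -1` gives `P·Δ(n) = P + n - Σ sᵢ(n) Qᵢ`.
Hence `Δ(n + P) = Δ(n) + 1`, so each residue `m < P` contributes `binom(1 - Δ(m), 2)` to `κ`,
and `1 - Δ(m) = ⌊Σ sᵢ(m) Qᵢ / P⌋`. The same identity gives `Σ sᵢ(m) Qᵢ ≡ m (mod P)`, so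
`m ↦ s(m)` is injective on `[0, P)`, hence a bijection onto the box `∏ [0, pᵢ)`. Finally the
reflection `x = p - 1 - s` turns the level condition `⌊Σ sᵢQᵢ / P⌋ = l - j` into the inequalities
defining `A_j`.
-/

open Finset

lemma sum_range_mul_eq_sum_sum {M : Type*} [AddCommMonoid M] (g : ℕ → M) (K P : ℕ) :
    ∑ n ∈ range (K * P), g n = ∑ m ∈ range P, ∑ q ∈ range K, g (q * P + m) := by
  induction K with
  | zero => simp
  | succ K ih =>
    simp only [Nat.succ_mul, sum_range_add, ih, sum_range_succ, sum_add_distrib]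

lemma sum_range_min_zero_add (a : ℤ) {K : ℕ} (hK : -a ≤ K) :
    ∑ q ∈ range K, min 0 (a + q) = -((1 - a).toNat.choose 2 : ℤ) := by
  induction K generalizing a with
  | zero => simp [Nat.choose_eq_zero_of_lt (show (1 - a).toNat < 2 by omega)]
  | succ K ih =>
    have hshift : ∑ q ∈ range K, min 0 (a + ↑(q + 1)) = ∑ q ∈ range K, min 0 (a + 1 + q) := by
      push_cast; simp only [add_assoc, add_comm (1 : ℤ)]
    rw [sum_range_succ', hshift, ih (a + 1) (by push_cast at hK; omega)]
    rcases le_or_gt 0 a with ha | ha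
    · simp [Nat.choose_eq_zero_of_lt (show (1 - a).toNat < 2 by omega),
        Nat.choose_eq_zero_of_lt (show (-a).toNat < 2 by omega), ha]
    · obtain ⟨t, rfl⟩ : ∃ t : ℕ, a = -t := ⟨(-a).toNat, by omega⟩
      have ht : (1 - (-(t : ℤ) + 1)).toNat = t := by omega
      have ht1 : (1 - -(t : ℤ)).toNat = t + 1 := by omega
      rw [ht, ht1, Nat.choose_succ_succ, Nat.choose_one_right, min_eq_right (by omega)]
      push_cast; ring

lemma apply_mul_add_of_add_period {f : ℕ → ℤ} {P : ℕ} (hf : ∀ n, f (n + P) = f n + 1) (q m : ℕ) :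
    f (q * P + m) = f m + q := by
  induction q with
  | zero => simp
  | succ q ih => rw [Nat.succ_mul, add_right_comm, hf, ih]; push_cast; ring

theorem finsum_min_zero_of_add_period {f : ℕ → ℤ} {P : ℕ} (hP : 0 < P)
    (hf : ∀ n, f (n + P) = f n + 1) :
    ∑ᶠ n, min 0 (f n) = -∑ m ∈ range P, ((1 - f m).toNat.choose 2 : ℤ) := by
  set K := (range P).sup fun m => (-f m).toNat
  have hK : ∀ m < P, -f m ≤ K := fun m hm => by
    have := le_sup (f := fun m => (-f m).toNat) (mem_range.2 hm); omega
  have hsupp : (Function.support fun n => min 0 (f n)) ⊆ range (K * P) := by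
    intro n hn
    by_contra hnK
    rw [coe_range, Set.mem_Iio, not_lt] at hnK
    have hq : K ≤ n / P := (Nat.le_div_iff_mul_le hP).2 hnK
    have hfn := apply_mul_add_of_add_period hf (n / P) (n % P)
    rw [Nat.div_add_mod'] at hfn
    have := hK (n % P) (Nat.mod_lt n hP)
    exact hn (min_eq_left (by omega))
  rw [finsum_eq_sum_of_support_subset _ hsupp, sum_range_mul_eq_sum_sum, ← sum_neg_distrib]
  refine sum_congr rfl fun m hm => ?_
  simp only [apply_mul_add_of_add_period hf]
  exact sum_range_min_zero_add (f m) (hK m (mem_range.1 hm))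

lemma natCast_choose_two_toNat {t : ℤ} (ht : 0 ≤ t) :
    ((t.toNat.choose 2 : ℕ) : ℤ) = t * (t - 1) / 2 := by
  lift t to ℕ using ht
  rcases t with _ | n
  · simp
  · rw [Int.toNat_natCast, Nat.choose_two_right]
    push_cast
    ring_nf

lemma sum_choose_two_eq_sum_card_level {α : Type*} (s : Finset α) (lv : α → ℤ) (L : ℕ)
    (hlv : ∀ a ∈ s, 0 ≤ lv a ∧ lv a < L) :
    ∑ a ∈ s, ((lv a).toNat.choose 2 : ℤ) =
      ∑ j ∈ Icc 1 (L - 2), (((L : ℤ) - j - 1) * ((L : ℤ) - j) / 2) * #{a ∈ s | lv a = L - j} := by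
  have hmaps : ∀ a ∈ s, L - (lv a).toNat ∈ Icc 1 L := fun a ha => by
    have := hlv a ha; simp only [mem_Icc]; omega
  have hfiber : ∀ j ∈ Icc 1 L, ∑ a ∈ s with L - (lv a).toNat = j, ((lv a).toNat.choose 2 : ℤ) =
      (((L : ℤ) - j - 1) * ((L : ℤ) - j) / 2) * #{a ∈ s | lv a = L - j} := fun j hj => by
    simp only [mem_Icc] at hj
    have hfib : {a ∈ s | L - (lv a).toNat = j} = {a ∈ s | lv a = L - j} :=
      filter_congr fun a ha => by have := hlv a ha; omega
    rw [hfib, mul_comm, ← nsmul_eq_mul, ← sum_const]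
    refine sum_congr rfl fun a ha => ?_
    rw [(mem_filter.1 ha).2, natCast_choose_two_toNat (by omega)]
    ring_nf
  rw [← sum_fiberwise_of_maps_to hmaps, sum_congr rfl hfiber]
  refine (sum_subset (Icc_subset_Icc_right (Nat.sub_le L 2)) fun j hj hj' => ?_).symm
  simp only [mem_Icc] at hj hj'
  obtain rfl | rfl : j = L - 1 ∨ j = L := by omega
  · rw [show (L : ℤ) - ((L - 1 : ℕ) : ℤ) - 1 = 0 by omega]; simp
  · simp

namespace Seifert

variable {ι : Type*}

def ceilRem (p p' : ι → ℕ) (n : ℕ) (i : ι) : ℤ := -((n * p' i : ℕ) : ℤ) % p i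

lemma mul_ceil_eq (p p' : ι → ℕ) (n : ℕ) (i : ι) :
    (p i : ℤ) * ⌈(n * p' i : ℚ) / p i⌉ = n * p' i + ceilRem p p' n i := by
  rw [← Nat.cast_mul, Rat.ceil_natCast_div_natCast, ceilRem, Int.emod_def]
  push_cast
  ring

variable [Fintype ι]

def delta (p p' : ι → ℕ) (e0 : ℤ) (n : ℕ) : ℤ := 1 + |e0| * n - ∑ i, ⌈(n * p' i : ℚ) / p i⌉

lemma prod_intCast_pos {p : ι → ℕ} (hp : ∀ i, 0 < p i) : 0 < ∏ i, (p i : ℤ) :=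
  prod_pos fun i _ => by exact_mod_cast hp i

variable [DecidableEq ι]

def cofactor (p : ι → ℕ) (i : ι) : ℤ := ∏ k ∈ univ.erase i, (p k : ℤ)

def weight (p : ι → ℕ) (y : ι → ℤ) : ℤ := ∑ i, y i * cofactor p i

noncomputable def box (p : ι → ℕ) : Finset (ι → ℤ) := Fintype.piFinset fun i => Ico 0 (p i : ℤ)

variable (p : ι → ℕ) (p' : ι → ℕ)

lemma mul_cofactor (i : ι) : (p i : ℤ) * cofactor p i = ∏ k, (p k : ℤ) :=
  mul_prod_erase univ (fun k => (p k : ℤ)) (mem_univ i)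

lemma ceilRem_add_prod (n : ℕ) : ceilRem p p' (n + ∏ i, p i) = ceilRem p p' n := by
  funext i
  have hshift : -(((n + ∏ k, p k) * p' i : ℕ) : ℤ) =
      -((n * p' i : ℕ) : ℤ) + p i * (-(cofactor p i * p' i)) := by
    push_cast
    rw [← mul_cofactor]
    ring
  rw [ceilRem, ceilRem, hshift, Int.add_mul_emod_self_left]

variable {p}

lemma cofactor_pos (hp : ∀ i, 0 < p i) (i : ι) : 0 < cofactor p i :=
  prod_pos fun k _ => by exact_mod_cast hp k

lemma ceilRem_mem_box (hp : ∀ i, 0 < p i) (n : ℕ) : ceilRem p p' n ∈ box p := by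
  simp only [box, Fintype.mem_piFinset, mem_Ico]
  intro i
  have hpi : (0 : ℤ) < p i := by exact_mod_cast hp i
  exact ⟨Int.emod_nonneg _ hpi.ne', Int.emod_lt_of_pos _ hpi⟩

variable {p'} {e0 : ℤ}

lemma e0_neg (hp : ∀ i, 0 < p i)
    (heq : e0 * ∏ i, (p i : ℤ) + ∑ i, cofactor p i * p' i = -1) : e0 < 0 := by
  have hP := prod_intCast_pos hp
  have hsum : 0 ≤ ∑ i, cofactor p i * p' i :=
    sum_nonneg fun i _ => mul_nonneg (cofactor_pos hp i).le (by positivity)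
  nlinarith

lemma prod_mul_delta (hp : ∀ i, 0 < p i)
    (heq : e0 * ∏ i, (p i : ℤ) + ∑ i, cofactor p i * p' i = -1) (n : ℕ) :
    (∏ i, (p i : ℤ)) * delta p p' e0 n = ∏ i, (p i : ℤ) + n - weight p (ceilRem p p' n) := by
  have hceil : (∏ i, (p i : ℤ)) * ∑ i, ⌈(n * p' i : ℚ) / p i⌉ =
      n * ∑ i, cofactor p i * p' i + weight p (ceilRem p p' n) := by
    simp only [mul_sum, weight, ← sum_add_distrib]
    refine sum_congr rfl fun i _ => ?_
    rw [← mul_cofactor, mul_right_comm, mul_ceil_eq]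
    ring
  rw [delta, abs_of_neg (e0_neg hp heq), mul_sub, hceil]
  linear_combination (-(n : ℤ)) * heq

lemma delta_add_prod (hp : ∀ i, 0 < p i)
    (heq : e0 * ∏ i, (p i : ℤ) + ∑ i, cofactor p i * p' i = -1) (n : ℕ) :
    delta p p' e0 (n + ∏ i, p i) = delta p p' e0 n + 1 := by
  have hP := prod_intCast_pos hp
  have h := prod_mul_delta hp heq (n + ∏ i, p i)
  rw [ceilRem_add_prod, Nat.cast_add, Nat.cast_prod] at h
  refine mul_left_cancel₀ hP.ne' ?_
  linear_combination h - prod_mul_delta hp heq n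

lemma one_sub_delta_eq_weight_div (hp : ∀ i, 0 < p i)
    (heq : e0 * ∏ i, (p i : ℤ) + ∑ i, cofactor p i * p' i = -1) {m : ℕ} (hm : m < ∏ i, p i) :
    1 - delta p p' e0 m = weight p (ceilRem p p' m) / ∏ i, (p i : ℤ) := by
  have hP := prod_intCast_pos hp
  have hmP : (m : ℤ) < ∏ i, (p i : ℤ) := by exact_mod_cast hm
  rw [eq_comm, Int.ediv_eq_iff_of_pos hP]
  have h := prod_mul_delta hp heq m
  constructor <;> nlinarith

lemma injOn_ceilRem (hp : ∀ i, 0 < p i)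
    (heq : e0 * ∏ i, (p i : ℤ) + ∑ i, cofactor p i * p' i = -1) :
    Set.InjOn (ceilRem p p') (range (∏ i, p i)) := by
  intro m hm m' hm' h
  have hmod (k : ℕ) : (k : ℤ) ≡ weight p (ceilRem p p' k) [ZMOD ∏ i, (p i : ℤ)] :=
    (Int.modEq_iff_dvd.2 ⟨1 - delta p p' e0 k, by linear_combination prod_mul_delta hp heq k⟩)
  have hcongr : (m : ℤ) ≡ m' [ZMOD ∏ i, (p i : ℤ)] := (hmod m).trans (h ▸ (hmod m').symm)
  rw [← Nat.cast_prod, Int.natCast_modEq_iff] at hcongr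
  exact hcongr.eq_of_lt_of_lt (mem_range.1 hm) (mem_range.1 hm')

lemma image_ceilRem_range (hp : ∀ i, 0 < p i)
    (heq : e0 * ∏ i, (p i : ℤ) + ∑ i, cofactor p i * p' i = -1) :
    (range (∏ i, p i)).image (ceilRem p p') = box p := by
  refine eq_of_subset_of_card_le (image_subset_iff.2 fun n _ => ceilRem_mem_box p' hp n) ?_
  rw [card_image_of_injOn (injOn_ceilRem hp heq)]
  simp [box]

lemma sum_range_choose_delta_eq_sum_box (hp : ∀ i, 0 < p i)
    (heq : e0 * ∏ i, (p i : ℤ) + ∑ i, cofactor p i * p' i = -1) :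
    ∑ m ∈ range (∏ i, p i), ((1 - delta p p' e0 m).toNat.choose 2 : ℤ) =
      ∑ y ∈ box p, ((weight p y / ∏ i, (p i : ℤ)).toNat.choose 2 : ℤ) := by
  rw [← image_ceilRem_range hp heq, sum_image (injOn_ceilRem hp heq)]
  exact sum_congr rfl fun m hm => by rw [one_sub_delta_eq_weight_div hp heq (mem_range.1 hm)]

lemma weight_div_mem_Ico [Nonempty ι] (hp : ∀ i, 0 < p i) {y : ι → ℤ} (hy : y ∈ box p) :
    0 ≤ weight p y / ∏ i, (p i : ℤ) ∧ weight p y / ∏ i, (p i : ℤ) < Fintype.card ι := by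
  simp only [box, Fintype.mem_piFinset, mem_Ico] at hy
  have hP := prod_intCast_pos hp
  have hlt : weight p y < ∑ _i : ι, ∏ i, (p i : ℤ) :=
    sum_lt_sum_of_nonempty univ_nonempty fun i _ =>
      mul_cofactor p i ▸ mul_lt_mul_of_pos_right (hy i).2 (cofactor_pos hp i)
  rw [sum_const, card_univ, nsmul_eq_mul] at hlt
  exact ⟨Int.ediv_nonneg (sum_nonneg fun i _ => mul_nonneg (hy i).1 (cofactor_pos hp i).le) hP.le,
    (Int.ediv_lt_iff_lt_mul hP).2 hlt⟩

lemma weight_reflect (x : ι → ℕ) :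
    weight p (fun i => p i - 1 - x i) =
      Fintype.card ι * ∏ i, (p i : ℤ) - ∑ i, cofactor p i - weight p (fun i => x i) := by
  simp only [weight, sub_mul, sum_sub_distrib, mul_cofactor, one_mul, sum_const, card_univ,
    nsmul_eq_mul]

lemma ncard_eq_card_weight_div_eq (hp : ∀ i, 0 < p i) (j : ℤ) :
    {x : ι → ℕ | (∀ i, x i ≤ p i - 1) ∧
        (j - 1) * ∏ i, (p i : ℤ) - ∑ i, cofactor p i < weight p (fun i => x i) ∧
        weight p (fun i => x i) ≤ j * ∏ i, (p i : ℤ) - ∑ i, cofactor p i}.ncard =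
      #{y ∈ box p | weight p y / ∏ i, (p i : ℤ) = Fintype.card ι - j} := by
  have hP := prod_intCast_pos hp
  set reflect : (ι → ℕ) → (ι → ℤ) := fun x i => p i - 1 - x i
  have hinj : reflect.Injective := fun x x' h => funext fun i => by
    have := congrFun h i; simp only [reflect] at this; omega
  rw [← Set.ncard_image_of_injective _ hinj, ← Set.ncard_coe_finset]
  congr 1
  ext y
  simp only [Set.mem_image, Set.mem_ofPred_eq, coe_filter, box, Fintype.mem_piFinset, mem_Ico,
    Int.ediv_eq_iff_of_pos hP]
  constructor
  · rintro ⟨x, ⟨hx, hlo, hhi⟩, rfl⟩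
    have hw := weight_reflect (p := p) x
    refine ⟨fun i => ?_, ?_, ?_⟩
    · have := hp i; have := hx i; simp only [reflect]; omega
    · simp only [reflect]; linarith
    · simp only [reflect]; linarith
  · rintro ⟨hy, hlo, hhi⟩
    set x : ι → ℕ := fun i => (p i - 1 - y i).toNat
    have hxy : reflect x = y := funext fun i => by have := hy i; simp only [reflect, x]; omega
    have hw := weight_reflect (p := p) x
    rw [show (fun i => (p i : ℤ) - 1 - x i) = y from hxy] at hw
    refine ⟨x, ⟨fun i => ?_, by linarith, by linarith⟩, hxy⟩
    have := hy i; simp only [x]; omega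

end Seifert

theorem stmt_12_general (l : ℕ) (hl : 3 ≤ l) (p : Fin l → ℕ)
    (hp1 : ∀ i, 1 < p i)
    (e0 : ℤ) (p' : Fin l → ℕ)
    (heq : e0 * ∏ i, (p i : ℤ)
      + ∑ i, (∏ j ∈ Finset.univ.erase i, (p j : ℤ)) * (p' i : ℤ) = -1)
    (Δ : ℕ → ℤ)
    (hΔ : ∀ n : ℕ, Δ n = 1 + |e0| * n - ∑ i, ⌈(n * p' i : ℚ) / p i⌉) :
    |∑ᶠ n : ℕ, min 0 (Δ n)| =
      ∑ j ∈ Finset.Icc 1 (l - 2),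
        (((l : ℤ) - j - 1) * ((l : ℤ) - j) / 2) *
          ({x : Fin l → ℕ | (∀ i, x i ≤ p i - 1) ∧
            ((j : ℤ) - 1) * ∏ i, (p i : ℤ)
                - ∑ i, ∏ k ∈ Finset.univ.erase i, (p k : ℤ)
              < ∑ i, (x i : ℤ) * ∏ k ∈ Finset.univ.erase i, (p k : ℤ) ∧
            ∑ i, (x i : ℤ) * ∏ k ∈ Finset.univ.erase i, (p k : ℤ)
              ≤ (j : ℤ) * ∏ i, (p i : ℤ)
                - ∑ i, ∏ k ∈ Finset.univ.erase i, (p k : ℤ)}.ncard : ℤ) := by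
  have hp : ∀ i, 0 < p i := fun i => Nat.zero_lt_of_lt (hp1 i)
  have : Nonempty (Fin l) := ⟨⟨0, by omega⟩⟩
  obtain rfl : Δ = Seifert.delta p p' e0 := funext hΔ
  rw [finsum_min_zero_of_add_period (prod_pos fun i _ => hp i) (Seifert.delta_add_prod hp heq),
    abs_neg, abs_of_nonneg (sum_nonneg fun _ _ => Nat.cast_nonneg _),
    Seifert.sum_range_choose_delta_eq_sum_box hp heq,
    sum_choose_two_eq_sum_card_level _ _ _ fun y hy => Seifert.weight_div_mem_Ico hp hy,
    Fintype.card_fin]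
  refine sum_congr rfl fun j _ => ?_
  have hcount := Seifert.ncard_eq_card_weight_div_eq hp (j : ℤ)
  rw [Fintype.card_fin] at hcount
  rw [← hcount]
  rfl

/-- For `l ≥ 3`: `κ(p₁,…,p_l) = Σ_{j=1}^{l-2} ((l-j-1)(l-j)/2)·A_j`, where `A_k` is the
number of lattice points `x ∈ ∏ᵢ [0, pᵢ-1]` with `N₀(k-1) < Σᵢ xᵢ·(P/pᵢ) ≤ N₀(k)` and
`N₀(k) = P(k - Σᵢ 1/pᵢ) = k·P - Σᵢ P/pᵢ`. -/
theorem stmt_12 (l : ℕ) (hl : 3 ≤ l) (p : Fin l → ℕ)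
    (hp1 : ∀ i, 1 < p i) (hmono : StrictMono p)
    (hcop : ∀ i j, i ≠ j → Nat.Coprime (p i) (p j))
    (e0 : ℤ) (p' : Fin l → ℕ) (hp' : ∀ i, p' i ≤ p i - 1)
    (heq : e0 * ∏ i, (p i : ℤ)
      + ∑ i, (∏ j ∈ Finset.univ.erase i, (p j : ℤ)) * (p' i : ℤ) = -1)
    (Δ : ℕ → ℤ)
    (hΔ : ∀ n : ℕ, Δ n = 1 + |e0| * n - ∑ i, ⌈(n * p' i : ℚ) / p i⌉) :
    |∑ᶠ n : ℕ, min 0 (Δ n)| =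
      ∑ j ∈ Finset.Icc 1 (l - 2),
        (((l : ℤ) - j - 1) * ((l : ℤ) - j) / 2) *
          ({x : Fin l → ℕ | (∀ i, x i ≤ p i - 1) ∧
            ((j : ℤ) - 1) * ∏ i, (p i : ℤ)
                - ∑ i, ∏ k ∈ Finset.univ.erase i, (p k : ℤ)
              < ∑ i, (x i : ℤ) * ∏ k ∈ Finset.univ.erase i, (p k : ℤ) ∧
            ∑ i, (x i : ℤ) * ∏ k ∈ Finset.univ.erase i, (p k : ℤ)
              ≤ (j : ℤ) * ∏ i, (p i : ℤ)
                - ∑ i, ∏ k ∈ Finset.univ.erase i, (p k : ℤ)}.ncard : ℤ) :=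
  stmt_12_general l hl p hp1 e0 p' heq Δ hΔ
end

section
/- Let (p₁, …, p_l) and (q₁, …, q_l) be tuples of pairwise coprime integers with 1 < p₁ < … < p_l, 1 < q₁ < … < q_l and l ≥ 3. If pᵢ ≥ qᵢ for all i = 1, …, l, then κ(p₁, …, p_l) ≥ κ(q₁, …, q_l). -/
/-!
Write `P = ∏ pᵢ` and let `rᵢ(n) ∈ [0, pᵢ)` be given by `⌈n pᵢ'/pᵢ⌉ = (n pᵢ' + rᵢ(n))/pᵢ`.
Dividing the defining relation of `e₀` by `P` gives `|e₀| = 1/P + Σ pᵢ'/pᵢ`, hence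
`Δ(n) = 1 + n/P - Σ rᵢ(n)/pᵢ`; as `Δ(n)` is an integer, `Δ(n) = 1 + ⌊n/P⌋ - ⌊Σ rᵢ(n)/pᵢ⌋`.
Since `pᵢ'` is a unit mod `pᵢ`, the Chinese remainder theorem makes `n ↦ (r(n), ⌊n/P⌋)` a
bijection from `[0, lP)` onto `∏ [0, pᵢ) × [0, l)`, and `Δ(n) ≥ 0` for `n ≥ lP`. Summing over
`⌊n/P⌋` first gives `κ(p) = Σ_{c ∈ ∏ [0, pᵢ)} (⌊Σ cᵢ/pᵢ⌋ choose 2)`. This count is monotone: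
for `qᵢ ≤ pᵢ` the map `cᵢ ↦ ⌈cᵢ pᵢ/qᵢ⌉` embeds the `q`-grid into the `p`-grid without
decreasing `Σ cᵢ/qᵢ`.
-/

open Finset

-- For `0 < d`, `ceilGap a d = (-a) mod d`: how far `a` falls short of a multiple of `d`.
def ceilGap (a d : ℕ) : ℕ := ⌈(a : ℚ) / d⌉₊ * d - a

lemma ceilGap_add (a : ℕ) {d : ℕ} (hd : 0 < d) : ceilGap a d + a = ⌈(a : ℚ) / d⌉₊ * d := by
  refine Nat.sub_add_cancel ?_
  have : (a : ℚ) ≤ ⌈(a : ℚ) / d⌉₊ * d := by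
    rw [← div_le_iff₀ (by positivity)]
    exact Nat.le_ceil _
  exact_mod_cast this

lemma dvd_ceilGap_add (a : ℕ) {d : ℕ} (hd : 0 < d) : d ∣ ceilGap a d + a :=
  ceilGap_add a hd ▸ dvd_mul_left d _

lemma ceilGap_lt (a : ℕ) {d : ℕ} (hd : 0 < d) : ceilGap a d < d := by
  have hd' : (0 : ℚ) < d := by exact_mod_cast hd
  have hlt : ((ceilGap a d + a : ℕ) : ℚ) < d + a := by
    rw [ceilGap_add a hd, Nat.cast_mul]
    calc (⌈(a : ℚ) / d⌉₊ : ℚ) * d < (a / d + 1) * d :=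
          mul_lt_mul_of_pos_right (Nat.ceil_lt_add_one (by positivity)) hd'
      _ = d + a := by field_simp; ring
  have : ceilGap a d + a < d + a := by exact_mod_cast hlt
  omega

lemma ceil_div_eq_add_ceilGap_div (a : ℕ) {d : ℕ} (hd : 0 < d) :
    (⌈(a : ℚ) / d⌉ : ℚ) = (a + ceilGap a d) / d := by
  rw [← Int.natCast_ceil_eq_ceil (by positivity), Int.cast_natCast, eq_div_iff (by positivity)]
  exact_mod_cast (add_comm (a : ℕ) _ ▸ ceilGap_add a hd).symm

section Rescale

variable {a b : ℕ}

lemma natCeil_mul_div_lt {c : ℕ} (hcb : c < b) (hba : b ≤ a) : ⌈(c * a : ℚ) / b⌉₊ < a := by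
  have hb : (0 : ℚ) < b := by exact_mod_cast (Nat.zero_le c).trans_lt hcb
  have hc : (c : ℚ) + 1 ≤ b := by exact_mod_cast hcb
  have hba' : (b : ℚ) ≤ a := by exact_mod_cast hba
  refine Nat.lt_of_le_sub_one (by omega) (Nat.ceil_le.2 ?_)
  rw [div_le_iff₀ hb, Nat.cast_pred (by omega)]
  nlinarith

lemma strictMono_natCeil_mul_div (hb : 0 < b) (hba : b ≤ a) :
    StrictMono fun c : ℕ => ⌈(c * a : ℚ) / b⌉₊ := by
  intro c c' hcc'
  have hb' : (0 : ℚ) < b := by exact_mod_cast hb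
  have hstep : (c * a : ℚ) / b + 1 ≤ (c' * a : ℚ) / b := by
    rw [div_add_one hb'.ne', div_le_div_iff_of_pos_right hb']
    have : (c : ℚ) + 1 ≤ c' := by exact_mod_cast hcc'
    have : (b : ℚ) ≤ a := by exact_mod_cast hba
    nlinarith
  exact_mod_cast (Nat.ceil_lt_add_one (by positivity)).trans_le (hstep.trans (Nat.le_ceil _))

lemma div_le_natCeil_mul_div_div (c : ℕ) (ha : 0 < a) :
    (c : ℚ) / b ≤ ⌈(c * a : ℚ) / b⌉₊ / a := by
  rw [le_div_iff₀ (by exact_mod_cast ha), div_mul_eq_mul_div]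
  exact Nat.le_ceil _

end Rescale

lemma sum_range_tsub_succ_eq_choose {k L : ℕ} (hk : k ≤ L) :
    ∑ t ∈ range L, (k - (t + 1)) = k.choose 2 := by
  rw [← sum_subset (range_subset_range.2 hk) fun t _ ht => by simp at ht; omega]
  rw [Nat.choose_two_right, ← sum_range_id, ← sum_range_reflect (fun j => j) k]
  exact sum_congr rfl fun t ht => by simp at ht; omega

lemma sum_range_mul_card_eq_sum_product {α M : Type*} [DecidableEq α] [AddCommMonoid M]
    (s : Finset α) (r : ℕ → α) (hrs : ∀ n, r n ∈ s) (hr : ∀ n m, r n = r m → n ≡ m [MOD #s])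
    (L : ℕ) (F : α → ℕ → M) :
    ∑ n ∈ range (L * #s), F (r n) (n / #s) = ∑ x ∈ s ×ˢ range L, F x.1 x.2 := by
  set φ : ℕ → α × ℕ := fun n => (r n, n / #s)
  have hinj : Set.InjOn φ (range (L * #s)) := by
    intro n _ m _ h
    simp only [φ, Prod.mk.injEq] at h
    rw [← Nat.div_add_mod n #s, ← Nat.div_add_mod m #s, h.2, hr n m h.1]
  have hsub : (range (L * #s)).image φ ⊆ s ×ˢ range L := by
    intro x hx
    obtain ⟨n, hn, rfl⟩ := mem_image.1 hx
    simp only [mem_range] at hn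
    exact mem_product.2 ⟨hrs n, mem_range.2 (Nat.div_lt_of_lt_mul (by linarith))⟩
  have himage : (range (L * #s)).image φ = s ×ˢ range L := by
    refine eq_of_subset_of_card_le hsub ?_
    rw [card_image_of_injOn hinj, card_product, card_range, card_range, mul_comm]
  rw [← himage, sum_image hinj]

variable {ι : Type*} [Fintype ι]

lemma modEq_prod_of_ceilGap_eq {p p' : ι → ℕ} (hp : ∀ i, 0 < p i)
    (hcop : Pairwise fun i j => Nat.Coprime (p i) (p j)) (hp' : ∀ i, IsCoprime (p i : ℤ) (p' i))
    {n m : ℕ} (h : ∀ i, ceilGap (n * p' i) (p i) = ceilGap (m * p' i) (p i)) :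
    n ≡ m [MOD ∏ i, p i] := by
  refine Nat.modEq_iff_dvd.2 ?_
  push_cast
  refine prod_dvd_of_coprime (fun i _ j _ hij => Nat.isCoprime_iff_coprime.2 (hcop hij))
    fun i _ => ?_
  refine (hp' i).dvd_of_dvd_mul_right ?_
  have hn : (p i : ℤ) ∣ (ceilGap (m * p' i) (p i) + n * p' i : ℕ) := by
    rw [← h i]; exact Int.natCast_dvd_natCast.2 (dvd_ceilGap_add _ (hp i))
  have hm : (p i : ℤ) ∣ (ceilGap (m * p' i) (p i) + m * p' i : ℕ) :=
    Int.natCast_dvd_natCast.2 (dvd_ceilGap_add _ (hp i))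
  convert dvd_sub hm hn using 1
  push_cast
  ring

variable [DecidableEq ι]

lemma sum_prod_erase_mul_eq_prod_mul_sum_div {K : Type*} [Field K] (p a : ι → K)
    (hp : ∀ i, p i ≠ 0) :
    ∑ i, (∏ j ∈ univ.erase i, p j) * a i = (∏ i, p i) * ∑ i, a i / p i := by
  rw [mul_sum]
  refine sum_congr rfl fun i _ => ?_
  rw [← mul_prod_erase univ p (mem_univ i)]
  field_simp [hp i]

lemma neg_cast_eq_inv_prod_add_sum_div {p a : ι → ℕ} {e : ℤ} (hp : ∀ i, 0 < p i)
    (h : e * ∏ i, (p i : ℤ) + ∑ i, (∏ j ∈ univ.erase i, (p j : ℤ)) * (a i : ℤ) = -1) :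
    -(e : ℚ) = 1 / ∏ i, (p i : ℚ) + ∑ i, (a i : ℚ) / p i := by
  have hq : (e : ℚ) * ∏ i, (p i : ℚ) + ∑ i, (∏ j ∈ univ.erase i, (p j : ℚ)) * a i = -1 := by
    exact_mod_cast h
  have hP : (∏ i, (p i : ℚ)) ≠ 0 := prod_ne_zero_iff.2 fun i _ => by exact_mod_cast (hp i).ne'
  rw [sum_prod_erase_mul_eq_prod_mul_sum_div _ _ fun i => by exact_mod_cast (hp i).ne'] at hq
  field_simp
  linear_combination -hq

lemma isCoprime_of_mul_prod_add_sum {p a : ι → ℕ} {e : ℤ}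
    (h : e * ∏ i, (p i : ℤ) + ∑ i, (∏ j ∈ univ.erase i, (p j : ℤ)) * (a i : ℤ) = -1) (i : ι) :
    IsCoprime (p i : ℤ) (a i) := by
  have hdvd : (p i : ℤ) ∣ ∑ j ∈ univ.erase i, (∏ k ∈ univ.erase j, (p k : ℤ)) * a j :=
    dvd_sum fun j hj =>
      (dvd_prod_of_mem _ (mem_erase.2 ⟨(ne_of_mem_erase hj).symm, mem_univ i⟩)).mul_right _
  obtain ⟨k, hk⟩ := hdvd
  refine ⟨-e * ∏ j ∈ univ.erase i, (p j : ℤ) - k, -∏ j ∈ univ.erase i, (p j : ℤ), ?_⟩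
  rw [← add_sum_erase _ _ (mem_univ i), hk, ← mul_prod_erase univ _ (mem_univ i)] at h
  linear_combination -h

lemma cast_eq_one_add_div_prod_sub_sum {p p' : ι → ℕ} {e : ℤ} (hp : ∀ i, 0 < p i)
    (h : e * ∏ i, (p i : ℤ) + ∑ i, (∏ j ∈ univ.erase i, (p j : ℤ)) * (p' i : ℤ) = -1)
    {Δ : ℕ → ℤ} (hΔ : ∀ n : ℕ, Δ n = 1 + |e| * n - ∑ i, ⌈(n * p' i : ℚ) / p i⌉) (n : ℕ) :
    (Δ n : ℚ) = 1 + n / ∏ i, (p i : ℚ) - ∑ i, (ceilGap (n * p' i) (p i) : ℚ) / p i := by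
  have he := neg_cast_eq_inv_prod_add_sum_div hp h
  have hceil : ∀ i,
      (⌈(n * p' i : ℚ) / p i⌉ : ℚ) = (n * p' i + ceilGap (n * p' i) (p i)) / p i := fun i => by
    exact_mod_cast ceil_div_eq_add_ceilGap_div (n * p' i) (hp i)
  have habs : (|e| : ℚ) = -e := by
    rw [abs_of_neg]
    have : (0 : ℚ) < 1 / ∏ i, (p i : ℚ) :=
      one_div_pos.2 (prod_pos fun i _ => by exact_mod_cast hp i)
    have : (0 : ℚ) ≤ ∑ i, (p' i : ℚ) / p i := by positivity
    linarith
  have hsum : ∑ i, (⌈(n * p' i : ℚ) / p i⌉ : ℚ)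
      = n * ∑ i, (p' i : ℚ) / p i + ∑ i, (ceilGap (n * p' i) (p i) : ℚ) / p i := by
    rw [mul_sum, ← sum_add_distrib]
    exact sum_congr rfl fun i _ => by rw [hceil, add_div, mul_div_assoc]
  rw [hΔ n]
  push_cast
  rw [habs, he, hsum]
  ring

lemma eq_one_add_div_prod_sub_floor {p p' : ι → ℕ} {e : ℤ} (hp : ∀ i, 0 < p i)
    (h : e * ∏ i, (p i : ℤ) + ∑ i, (∏ j ∈ univ.erase i, (p j : ℤ)) * (p' i : ℤ) = -1)
    {Δ : ℕ → ℤ} (hΔ : ∀ n : ℕ, Δ n = 1 + |e| * n - ∑ i, ⌈(n * p' i : ℚ) / p i⌉) (n : ℕ) :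
    Δ n = 1 + (n / ∏ i, p i : ℕ) - ⌊∑ i, (ceilGap (n * p' i) (p i) : ℚ) / p i⌋₊ := by
  have hcast := cast_eq_one_add_div_prod_sub_sum hp h hΔ n
  -- the two fractions differ by the integer `1 - Δ n`, so their floors do too
  have hfloor := Int.floor_add_intCast ((n : ℚ) / ∏ i, (p i : ℚ)) (1 - Δ n)
  rw [Int.cast_sub, Int.cast_one, show (n : ℚ) / ∏ i, (p i : ℚ) + (1 - Δ n) =
    ∑ i, (ceilGap (n * p' i) (p i) : ℚ) / p i by linarith] at hfloor
  rw [← Int.natCast_floor_eq_floor (by positivity)] at hfloor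
  have : ⌊(n : ℚ) / ∏ i, (p i : ℚ)⌋ = (n / ∏ i, p i : ℕ) := by
    exact_mod_cast Rat.floor_natCast_div_natCast n (∏ i, p i)
  omega

def kappaCount (p : ι → ℕ) : ℕ :=
  ∑ c ∈ Fintype.piFinset fun i => range (p i), ⌊∑ i, (c i : ℚ) / p i⌋₊.choose 2

lemma floor_sum_div_le_card {p c : ι → ℕ} (hc : c ∈ Fintype.piFinset fun i => range (p i)) :
    ⌊∑ i, (c i : ℚ) / p i⌋₊ ≤ Fintype.card ι := by
  refine Nat.floor_le_of_le ?_
  calc ∑ i, (c i : ℚ) / p i ≤ ∑ _i : ι, (1 : ℚ) := sum_le_sum fun i _ => by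
        have := mem_range.1 (Fintype.mem_piFinset.1 hc i)
        exact div_le_one_of_le₀ (by exact_mod_cast this.le) (Nat.cast_nonneg _)
    _ = Fintype.card ι := by simp

theorem abs_finsum_min_zero_eq_kappaCount {p p' : ι → ℕ} {e : ℤ} (hp : ∀ i, 0 < p i)
    (hcop : Pairwise fun i j => Nat.Coprime (p i) (p j))
    (h : e * ∏ i, (p i : ℤ) + ∑ i, (∏ j ∈ univ.erase i, (p j : ℤ)) * (p' i : ℤ) = -1)
    {Δ : ℕ → ℤ} (hΔ : ∀ n : ℕ, Δ n = 1 + |e| * n - ∑ i, ⌈(n * p' i : ℚ) / p i⌉) :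
    |∑ᶠ n : ℕ, min 0 (Δ n)| = kappaCount p := by
  set grid := Fintype.piFinset fun i => range (p i)
  set r : ℕ → ι → ℕ := fun n i => ceilGap (n * p' i) (p i)
  set k : (ι → ℕ) → ℕ := fun c => ⌊∑ i, (c i : ℚ) / p i⌋₊
  have hcard : #grid = ∏ i, p i := by simp [grid, Fintype.card_piFinset]
  have hr : ∀ n, r n ∈ grid := fun n =>
    Fintype.mem_piFinset.2 fun i => mem_range.2 (ceilGap_lt _ (hp i))
  have hterm : ∀ n, min 0 (Δ n) = -((k (r n) - (n / #grid + 1) : ℕ) : ℤ) := by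
    intro n
    have hΔn : Δ n = 1 + (n / #grid : ℕ) - k (r n) :=
      hcard ▸ eq_one_add_div_prod_sub_floor hp h hΔ n
    omega
  have hsupp : Function.support (fun n => min 0 (Δ n)) ⊆ range (Fintype.card ι * #grid) := by
    intro n hn
    by_contra hlt
    have hle : Fintype.card ι ≤ n / #grid := by
      rw [Nat.le_div_iff_mul_le (hcard ▸ prod_pos fun i _ => hp i)]
      simpa using hlt
    have hk : k (r n) ≤ Fintype.card ι := floor_sum_div_le_card (hr n)
    exact hn (show min 0 (Δ n) = 0 by rw [hterm n]; omega)
  have hmod : ∀ n m, r n = r m → n ≡ m [MOD #grid] := fun n m hnm =>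
    hcard ▸ modEq_prod_of_ceilGap_eq hp hcop (isCoprime_of_mul_prod_add_sum h) (congrFun hnm)
  rw [finsum_eq_sum_of_support_subset _ hsupp, sum_congr rfl fun n _ => hterm n, sum_neg_distrib,
    abs_neg, ← Nat.cast_sum, Nat.abs_cast,
    sum_range_mul_card_eq_sum_product grid r hr hmod _ fun c t => k c - (t + 1), sum_product]
  exact_mod_cast sum_congr rfl fun c hc =>
    sum_range_tsub_succ_eq_choose (floor_sum_div_le_card hc)

theorem kappaCount_mono {p q : ι → ℕ} (hq : ∀ i, 0 < q i) (hqp : ∀ i, q i ≤ p i) :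
    kappaCount q ≤ kappaCount p := by
  set f : (ι → ℕ) → ι → ℕ := fun c i => ⌈(c i * p i : ℚ) / q i⌉₊
  have hf : ∀ c ∈ Fintype.piFinset fun i => range (q i),
      f c ∈ Fintype.piFinset fun i => range (p i) := by
    simp only [Fintype.mem_piFinset, mem_range]
    exact fun c hc i => natCeil_mul_div_lt (hc i) (hqp i)
  have hinj : Set.InjOn f (Fintype.piFinset fun i => range (q i)) := fun c _ c' _ h =>
    funext fun i => (strictMono_natCeil_mul_div (hq i) (hqp i)).injective (congrFun h i)
  calc kappaCount q
      ≤ ∑ c ∈ Fintype.piFinset (fun i => range (q i)), ⌊∑ i, (f c i : ℚ) / p i⌋₊.choose 2 := by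
        refine sum_le_sum fun c _ => Nat.choose_le_choose 2 (Nat.floor_le_floor ?_)
        exact sum_le_sum fun i _ => div_le_natCeil_mul_div_div (c i) ((hq i).trans_le (hqp i))
    _ = ∑ c ∈ (Fintype.piFinset fun i => range (q i)).image f,
          ⌊∑ i, (c i : ℚ) / p i⌋₊.choose 2 := by rw [sum_image hinj]
    _ ≤ kappaCount p := sum_le_sum_of_subset (image_subset_iff.2 hf)

theorem stmt_14_general (l : ℕ) (p q : Fin l → ℕ)
    (hp1 : ∀ i, 1 < p i)
    (hpcop : ∀ i j, i ≠ j → Nat.Coprime (p i) (p j))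
    (hq1 : ∀ i, 1 < q i)
    (hqcop : ∀ i j, i ≠ j → Nat.Coprime (q i) (q j))
    (e0 : ℤ) (p' : Fin l → ℕ)
    (heqp : e0 * ∏ i, (p i : ℤ)
      + ∑ i, (∏ j ∈ Finset.univ.erase i, (p j : ℤ)) * (p' i : ℤ) = -1)
    (f0 : ℤ) (q' : Fin l → ℕ)
    (heqq : f0 * ∏ i, (q i : ℤ)
      + ∑ i, (∏ j ∈ Finset.univ.erase i, (q j : ℤ)) * (q' i : ℤ) = -1)
    (Δp Δq : ℕ → ℤ)
    (hΔp : ∀ n : ℕ, Δp n = 1 + |e0| * n - ∑ i, ⌈(n * p' i : ℚ) / p i⌉)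
    (hΔq : ∀ n : ℕ, Δq n = 1 + |f0| * n - ∑ i, ⌈(n * q' i : ℚ) / q i⌉)
    (hge : ∀ i, q i ≤ p i) :
    |∑ᶠ n : ℕ, min 0 (Δq n)| ≤ |∑ᶠ n : ℕ, min 0 (Δp n)| := by
  have hp : ∀ i, 0 < p i := fun i => (hp1 i).pos
  have hq : ∀ i, 0 < q i := fun i => (hq1 i).pos
  rw [abs_finsum_min_zero_eq_kappaCount hp hpcop heqp hΔp,
    abs_finsum_min_zero_eq_kappaCount hq hqcop heqq hΔq]
  exact_mod_cast kappaCount_mono hq hge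

/-- Monotonicity of `κ` under the natural partial order of `l`-tuples:
if `pᵢ ≥ qᵢ` for all `i`, then `κ(p₁,…,p_l) ≥ κ(q₁,…,q_l)`. -/
theorem stmt_14 (l : ℕ) (hl : 3 ≤ l) (p q : Fin l → ℕ)
    (hp1 : ∀ i, 1 < p i) (hpmono : StrictMono p)
    (hpcop : ∀ i j, i ≠ j → Nat.Coprime (p i) (p j))
    (hq1 : ∀ i, 1 < q i) (hqmono : StrictMono q)
    (hqcop : ∀ i j, i ≠ j → Nat.Coprime (q i) (q j))
    (e0 : ℤ) (p' : Fin l → ℕ) (hp' : ∀ i, p' i ≤ p i - 1)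
    (heqp : e0 * ∏ i, (p i : ℤ)
      + ∑ i, (∏ j ∈ Finset.univ.erase i, (p j : ℤ)) * (p' i : ℤ) = -1)
    (f0 : ℤ) (q' : Fin l → ℕ) (hq' : ∀ i, q' i ≤ q i - 1)
    (heqq : f0 * ∏ i, (q i : ℤ)
      + ∑ i, (∏ j ∈ Finset.univ.erase i, (q j : ℤ)) * (q' i : ℤ) = -1)
    (Δp Δq : ℕ → ℤ)
    (hΔp : ∀ n : ℕ, Δp n = 1 + |e0| * n - ∑ i, ⌈(n * p' i : ℚ) / p i⌉)
    (hΔq : ∀ n : ℕ, Δq n = 1 + |f0| * n - ∑ i, ⌈(n * q' i : ℚ) / q i⌉)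
    (hge : ∀ i, q i ≤ p i) :
    |∑ᶠ n : ℕ, min 0 (Δq n)| ≤ |∑ᶠ n : ℕ, min 0 (Δp n)| :=
  stmt_14_general l p q hp1 hpcop hq1 hqcop e0 p' heqp f0 q' heqq Δp Δq hΔp hΔq hge
end

section
/- For every positive integer k, the set of all finite tuples (p₁, …, p_l) with l ≥ 3, the pᵢ pairwise coprime, 1 < p₁ < p₂ < … < p_l, and κ(p₁, …, p_l) = k, is finite. -/
private lemma harm_bound : ∀ m : ℕ, 2 ≤ m →
    ∑ j ∈ Finset.range m, (1 : ℚ) / (j + 2) ≤ (m : ℚ) - 7/6 := by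
  intro m
  induction m with
  | zero => omega
  | succ n ih =>
    intro hn
    rcases Nat.lt_or_ge n 2 with h | h
    · interval_cases n
      · omega
      · norm_num [Finset.sum_range_succ]
    · rw [Finset.sum_range_succ]
      have h1 : (1 : ℚ) / (n + 2) ≤ 1 := by
        rw [div_le_one (by positivity)]
        have : (0:ℚ) ≤ (n:ℚ) := Nat.cast_nonneg n
        linarith
      have := ih h
      push_cast
      linarith

set_option maxHeartbeats 2000000 in
private lemma key_bound {l : ℕ} (hl : 3 ≤ l) (p : Fin l → ℕ) (hp1 : ∀ i, 1 < p i)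
    (hmono : StrictMono p) (e0 : ℤ) (p' : Fin l → ℕ)
    (hparts : e0 * ∏ i, (p i : ℤ)
      + ∑ i, (∏ j ∈ Finset.univ.erase i, (p j : ℤ)) * (p' i : ℤ) = -1)
    (k : ℕ)
    (hκ : |∑ᶠ n : ℕ, min 0 (1 + |e0| * (n : ℤ) - ∑ i, ⌈(n * p' i : ℚ) / p i⌉)| = (k : ℤ)) :
    ∀ i, p i ≤ 6 * k + 6 := by
  have hlpos : 0 < l := by omega
  have : Nonempty (Fin l) := ⟨⟨0, hlpos⟩⟩
  obtain ⟨Pn, hPn⟩ : ∃ Pn : ℕ, Pn = ∏ i, p i := ⟨_, rfl⟩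
  obtain ⟨P, hP⟩ : ∃ P : ℤ, P = ∏ i, (p i : ℤ) := ⟨_, rfl⟩
  have hPcast : (Pn : ℤ) = P := by rw [hPn, hP]; push_cast; rfl
  have hppos : ∀ i, (0:ℤ) < p i := fun i => by
    exact_mod_cast Nat.lt_of_lt_of_le Nat.zero_lt_one (hp1 i).le
  have hPpos : 0 < P := by rw [hP]; exact Finset.prod_pos fun i _ => hppos i
  obtain ⟨Q, hQ⟩ : ∃ Q : Fin l → ℤ, Q = fun i => ∏ j ∈ Finset.univ.erase i, (p j : ℤ) :=
    ⟨_, rfl⟩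
  have hQP : ∀ i, Q i * p i = P := by
    intro i; rw [hQ, hP]; exact Finset.prod_erase_mul _ _ (Finset.mem_univ i)
  have hQpos : ∀ i, 0 < Q i := fun i => by
    rw [hQ]; exact Finset.prod_pos fun j _ => hppos j
  have hQiq : ∀ i, ((Q i : ℤ) : ℚ) = (P : ℚ) / (p i : ℚ) := by
    intro i
    have hpj : ((p i : ℕ) : ℚ) ≠ 0 := ne_of_gt (by exact_mod_cast hppos i)
    rw [eq_div_iff hpj]
    exact_mod_cast congrArg (fun z : ℤ => (z : ℚ)) (hQP i)
  have hQdvd : ∀ i j, i ≠ j → (p i : ℤ) ∣ Q j := by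
    intro i j hij
    rw [hQ]
    exact Finset.dvd_prod_of_mem _ (Finset.mem_erase.mpr ⟨hij, Finset.mem_univ i⟩)
  have hpdvdP : ∀ i, (p i : ℤ) ∣ P := fun i => by
    rw [hP]; exact Finset.dvd_prod_of_mem _ (Finset.mem_univ i)
  have hparts' : e0 * P + ∑ i, Q i * (p' i : ℤ) = -1 := by
    rw [hQ, hP]; exact hparts
  have hSnn : 0 ≤ ∑ i, Q i * (p' i : ℤ) :=
    Finset.sum_nonneg fun i _ => mul_nonneg (hQpos i).le (by positivity)
  have he0 : e0 < 0 := by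
    by_contra h
    push_neg at h
    have : 0 ≤ e0 * P := mul_nonneg h hPpos.le
    linarith
  obtain ⟨E, hEdef⟩ : ∃ E : ℤ, E = -e0 := ⟨_, rfl⟩
  have habs : |e0| = E := by rw [hEdef]; exact abs_of_neg he0
  have hE : E * P - ∑ i, Q i * (p' i : ℤ) = 1 := by rw [hEdef]; linarith
  -- the last index
  set last : Fin l := ⟨l - 1, by omega⟩ with hlast
  have hp_ge : ∀ m : ℕ, ∀ h : m < l, m + 2 ≤ p ⟨m, h⟩ := by
    intro m
    induction m with
    | zero => intro h; exact hp1 _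
    | succ n ih =>
      intro h
      have h' : n < l := by omega
      have h2 := hmono (show (⟨n, h'⟩ : Fin l) < ⟨n + 1, h⟩ by simp [Fin.lt_def])
      have := ih h'
      omega
  obtain ⟨A, hA⟩ : ∃ A : ℕ, A = (p last - 1) / 6 := ⟨_, rfl⟩
  -- residue data
  obtain ⟨aa, haa⟩ : ∃ aa : ℕ → Fin l → ℤ,
      aa = fun (a : ℕ) (i : Fin l) => if i = last then (a : ℤ) else 1 :=
    ⟨fun (a : ℕ) (i : Fin l) => if i = last then (a : ℤ) else 1, rfl⟩
  obtain ⟨S, hS⟩ : ∃ S : ℕ → ℤ, S = fun a => ∑ j, Q j * aa a j := ⟨_, rfl⟩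
  obtain ⟨c, hc⟩ : ∃ c : ℕ → ℤ, c = fun a => S a / P + 1 := ⟨_, rfl⟩
  obtain ⟨N, hN⟩ : ∃ N : ℕ → ℤ, N = fun a => c a * P - S a := ⟨_, rfl⟩
  have haabound : ∀ a, 1 ≤ a → a ≤ A → ∀ i, 1 ≤ aa a i ∧ aa a i < p i := by
    intro a ha1 ha2 i
    constructor
    · by_cases h : i = last
      · rw [haa]; simp only [if_pos h]; exact_mod_cast ha1
      · rw [haa]; simp only [if_neg h]; exact le_rfl
    · by_cases h : i = last
      · rw [haa]; simp only [if_pos h]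
        have h2 : 1 < p last := hp1 last
        have hlt : a < p i := by rw [h]; omega
        exact_mod_cast hlt
      · rw [haa]; simp only [if_neg h]
        exact_mod_cast hp1 i
  -- positivity of S and bounds on N
  have hSrw : ∀ a, S a = ∑ j, Q j * aa a j := fun a => by rw [hS]
  have hcrw : ∀ a, c a = S a / P + 1 := fun a => by rw [hc]
  have hNrw : ∀ a, N a = c a * P - S a := fun a => by rw [hN]
  have hNrange : ∀ a, 0 < N a ∧ N a ≤ P := by
    intro a
    have hmod := Int.emod_lt_of_pos (S a) hPpos
    have hmod0 : 0 ≤ S a % P := Int.emod_nonneg _ (ne_of_gt hPpos)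
    have hdm := Int.mul_ediv_add_emod (S a) P
    constructor
    · rw [hNrw, hcrw]; nlinarith
    · rw [hNrw, hcrw]; nlinarith
  -- the divisibility fact
  have hdvd : ∀ a i, (p i : ℤ) ∣ N a * (p' i : ℤ) - aa a i := by
    intro a i
    have h2 : (p i : ℤ) ∣ ∑ j ∈ Finset.univ.erase i, Q j * aa a j :=
      Finset.dvd_sum fun j hj =>
        ((hQdvd i j (Finset.ne_of_mem_erase hj).symm).mul_right _)
    have h3 : (p i : ℤ) ∣ Q i * (p' i : ℤ) + 1 := by
      have hsplit : Q i * (p' i : ℤ) + ∑ j ∈ Finset.univ.erase i, Q j * (p' j : ℤ)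
          = ∑ j, Q j * (p' j : ℤ) :=
        Finset.add_sum_erase _ (fun j => Q j * (p' j : ℤ)) (Finset.mem_univ i)
      have heq : Q i * (p' i : ℤ) + 1
          = E * P - ∑ j ∈ Finset.univ.erase i, Q j * (p' j : ℤ) := by linarith
      rw [heq]
      exact dvd_sub ((hpdvdP i).mul_left E)
        (Finset.dvd_sum fun j hj => ((hQdvd i j (Finset.ne_of_mem_erase hj).symm).mul_right _))
    have hsplit2 : Q i * aa a i + ∑ j ∈ Finset.univ.erase i, Q j * aa a j = S a := by
      rw [hSrw]
      exact Finset.add_sum_erase _ (fun j => Q j * aa a j) (Finset.mem_univ i)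
    have keyeq : N a * (p' i : ℤ) - aa a i
        = (c a * (p' i : ℤ)) * P - (∑ j ∈ Finset.univ.erase i, Q j * aa a j) * (p' i : ℤ)
          - aa a i * (Q i * (p' i : ℤ) + 1) := by
      rw [hNrw, ← hsplit2]; ring
    rw [keyeq]
    exact dvd_sub (dvd_sub ((hpdvdP i).mul_left _) (h2.mul_right _)) (h3.mul_left _)
  obtain ⟨q, hq⟩ : ∃ q : ℕ → Fin l → ℤ,
      q = fun a i => (N a * (p' i : ℤ) - aa a i) / p i := ⟨_, rfl⟩
  have hqeq : ∀ a i, (p i : ℤ) * q a i = N a * (p' i : ℤ) - aa a i := by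
    intro a i; rw [hq]; exact Int.mul_ediv_cancel' (hdvd a i)
  -- ceiling computation
  have hNnat : ∀ a, ((N a).toNat : ℤ) = N a := fun a => Int.toNat_of_nonneg (hNrange a).1.le
  have hceil : ∀ a, 1 ≤ a → a ≤ A → ∀ i,
      ⌈(((N a).toNat : ℚ) * (p' i : ℚ)) / (p i : ℚ)⌉ = q a i + 1 := by
    intro a ha1 ha2 i
    have hpQ : (0:ℚ) < (p i : ℚ) := by exact_mod_cast hppos i
    obtain ⟨hai1, hai2⟩ := haabound a ha1 ha2 i
    have hx : (((N a).toNat : ℚ) * (p' i : ℚ)) / (p i : ℚ)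
        = q a i + (aa a i : ℚ) / (p i : ℚ) := by
      have hcast : ((N a).toNat : ℚ) = ((N a : ℤ) : ℚ) := by
        rw [← hNnat a]
        push_cast
        rfl
      have hzZ : N a * (p' i : ℤ) = (q a i) * (p i : ℤ) + aa a i := by
        have := hqeq a i; linarith
      have hz : ((N a : ℤ) : ℚ) * (p' i : ℚ)
          = ((q a i : ℤ) : ℚ) * (p i : ℚ) + ((aa a i : ℤ) : ℚ) := by
        exact_mod_cast congrArg (fun z : ℤ => (z : ℚ)) hzZ
      rw [hcast, hz, add_div, mul_div_assoc, div_self (ne_of_gt hpQ), mul_one]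
    rw [hx, Int.ceil_eq_iff]
    constructor
    · push_cast
      have : (0:ℚ) < (aa a i : ℚ) / (p i : ℚ) := by
        apply div_pos _ hpQ
        exact_mod_cast lt_of_lt_of_le zero_lt_one hai1
      linarith
    · push_cast
      have : ((aa a i : ℤ) : ℚ) / (p i : ℚ) ≤ 1 := by
        rw [div_le_one hpQ]
        exact_mod_cast hai2.le
      linarith
  -- S a < (l-2) * P
  have hSlt : ∀ a, 1 ≤ a → a ≤ A → S a < ((l : ℤ) - 2) * P := by
    intro a ha1 ha2
    have key : (∑ j, (aa a j : ℚ) / (p j : ℚ)) < (l : ℚ) - 2 := by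
      have hsplit : (aa a last : ℚ) / (p last : ℚ)
            + ∑ j ∈ Finset.univ.erase last, (aa a j : ℚ) / (p j : ℚ)
          = ∑ j, (aa a j : ℚ) / (p j : ℚ) :=
        Finset.add_sum_erase _ (fun j => (aa a j : ℚ) / (p j : ℚ)) (Finset.mem_univ last)
      have h1 : ∑ j ∈ Finset.univ.erase last, (aa a j : ℚ) / (p j : ℚ)
          ≤ ∑ j ∈ Finset.univ.erase last, (1 : ℚ) / ((j : ℕ) + 2) := by
        apply Finset.sum_le_sum
        intro j hj
        have hjal : j ≠ last := Finset.ne_of_mem_erase hj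
        have haj : aa a j = 1 := by rw [haa]; simp only [if_neg hjal]
        rw [haj]
        have hp2 : ((j : ℕ) : ℚ) + 2 ≤ (p j : ℚ) := by
          have h' := hp_ge j.1 j.2
          have h'' : (j : ℕ) + 2 ≤ p j := by simpa using h'
          exact_mod_cast h''
        push_cast
        apply one_div_le_one_div_of_le (by positivity) hp2
      have h2 : ∑ j ∈ Finset.univ.erase last, (1 : ℚ) / ((j : ℕ) + 2)
          = ∑ j ∈ Finset.range (l - 1), (1 : ℚ) / ((j : ℕ) + 2) := by
        have e2 : (1 : ℚ) / ((last : ℕ) + 2)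
              + ∑ j ∈ Finset.univ.erase last, (1 : ℚ) / ((j : ℕ) + 2)
            = ∑ j : Fin l, (1 : ℚ) / ((j : ℕ) + 2) :=
          Finset.add_sum_erase _ (fun j : Fin l => (1 : ℚ) / ((j : ℕ) + 2))
            (Finset.mem_univ last)
        have e1 : (∑ j : Fin l, (1 : ℚ) / ((j : ℕ) + 2))
            = ∑ j ∈ Finset.range l, (1 : ℚ) / (j + 2) :=
          Fin.sum_univ_eq_sum_range (fun j => (1 : ℚ) / (j + 2)) l
        have hl1 : l = (l - 1) + 1 := by omega
        have e3 : ∑ j ∈ Finset.range l, (1 : ℚ) / (j + 2)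
            = ∑ j ∈ Finset.range (l - 1), (1 : ℚ) / (j + 2) + 1 / ((l - 1 : ℕ) + 2) := by
          conv_lhs => rw [hl1]
          rw [Finset.sum_range_succ]
        have hlastv : (last : ℕ) = l - 1 := rfl
        rw [hlastv] at e2
        linarith
      have h3 : ∑ j ∈ Finset.range (l - 1), (1 : ℚ) / ((j : ℕ) + 2)
          ≤ ((l - 1 : ℕ) : ℚ) - 7/6 := harm_bound (l - 1) (by omega)
      have h4 : (aa a last : ℚ) / (p last : ℚ) < 1/6 := by
        have haq : aa a last = (a : ℤ) := by rw [haa]; simp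
        have h6a : 6 * a < p last := by
          have h5 := Nat.div_mul_le_self (p last - 1) 6
          have h6 := hp1 last
          omega
        rw [haq, div_lt_iff₀ (by exact_mod_cast hppos last)]
        have hc6 : ((6 * a : ℕ) : ℚ) < ((p last : ℕ) : ℚ) := by exact_mod_cast h6a
        push_cast at hc6 ⊢
        linarith
      have hlq : ((l - 1 : ℕ) : ℚ) = (l : ℚ) - 1 := by
        have h7 : (1:ℕ) ≤ l := by omega
        push_cast [Nat.cast_sub h7]
        ring
      rw [hlq] at h3
      linarith
    have hcastS : (S a : ℚ) = P * ∑ j, (aa a j : ℚ) / (p j : ℚ) := by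
      have hterm : ∀ j ∈ Finset.univ, ((Q j : ℤ) : ℚ) * ((aa a j : ℤ) : ℚ)
          = (P : ℚ) * ((aa a j : ℚ) / (p j : ℚ)) := by
        intro j _
        rw [hQiq j]
        ring
      calc (S a : ℚ) = ∑ j, ((Q j : ℤ) : ℚ) * ((aa a j : ℤ) : ℚ) := by
            rw [hSrw]; push_cast; rfl
        _ = ∑ j, (P : ℚ) * ((aa a j : ℚ) / (p j : ℚ)) := Finset.sum_congr rfl hterm
        _ = _ := by rw [Finset.mul_sum]
    have hfin : (S a : ℚ) < ((l : ℚ) - 2) * P := by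
      rw [hcastS]
      have hPQ : (0:ℚ) < (P : ℚ) := by exact_mod_cast hPpos
      nlinarith
    exact_mod_cast hfin
  have hclt : ∀ a, 1 ≤ a → a ≤ A → c a ≤ (l : ℤ) - 2 := by
    intro a ha1 ha2
    rw [hcrw]
    have : S a / P < (l : ℤ) - 2 := by
      rw [Int.ediv_lt_iff_lt_mul hPpos]
      exact hSlt a ha1 ha2
    omega
  -- the Delta computation at N a
  have hsumq : ∀ a, ∑ i, q a i = N a * E - c a := by
    intro a
    have hmul : P * ∑ i, q a i = P * (N a * E - c a) := by
      rw [Finset.mul_sum]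
      have step : ∀ i ∈ Finset.univ, P * q a i = Q i * (N a * (p' i : ℤ)) - Q i * aa a i := by
        intro i _
        calc P * q a i = Q i * ((p i : ℤ) * q a i) := by rw [← hQP i]; ring
        _ = Q i * (N a * (p' i : ℤ) - aa a i) := by rw [hqeq a i]
        _ = Q i * (N a * (p' i : ℤ)) - Q i * aa a i := by ring
      rw [Finset.sum_congr rfl step, Finset.sum_sub_distrib]
      have e1 : ∑ i, Q i * (N a * (p' i : ℤ)) = N a * ∑ i, Q i * (p' i : ℤ) := by
        rw [Finset.mul_sum]; apply Finset.sum_congr rfl; intro i _; ring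
      have e2 : ∑ i, Q i * aa a i = S a := (hSrw a).symm
      rw [e1, e2]
      have hNa : N a = c a * P - S a := hNrw a
      have hEe : ∑ i, Q i * (p' i : ℤ) = E * P - 1 := by linarith
      rw [hEe]
      nlinarith [hNa]
    exact mul_left_cancel₀ (ne_of_gt hPpos) hmul
  -- setting up the finsum
  obtain ⟨f, hf⟩ : ∃ f : ℕ → ℤ,
      f = fun n : ℕ => min 0 (1 + |e0| * (n : ℤ) - ∑ i, ⌈(n * p' i : ℚ) / p i⌉) :=
    ⟨fun n : ℕ => min 0 (1 + |e0| * (n : ℤ) - ∑ i, ⌈(n * p' i : ℚ) / p i⌉), rfl⟩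
  have hκ' : |∑ᶠ n : ℕ, f n| = (k : ℤ) := by rw [hf]; exact hκ
  have hfrw : ∀ n : ℕ, f n = min 0 (1 + |e0| * (n : ℤ) - ∑ i, ⌈(n * p' i : ℚ) / p i⌉) :=
    fun n => by rw [hf]
  have hfnonpos : ∀ n, f n ≤ 0 := fun n => by rw [hfrw]; exact min_le_left _ _
  obtain ⟨T, hT⟩ : ∃ T : ℕ, T = (l - 1) * Pn := ⟨_, rfl⟩
  have hsupp : ∀ n : ℕ, T ≤ n → f n = 0 := by
    intro n hn
    have hD : (0:ℤ) < 1 + |e0| * (n : ℤ) - ∑ i, ⌈(n * p' i : ℚ) / p i⌉ := by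
      have hstrict : (∑ i, (⌈(n * p' i : ℚ) / p i⌉ : ℚ))
          < ∑ i : Fin l, ((n : ℚ) * (p' i : ℚ) / (p i : ℚ) + 1) := by
        apply Finset.sum_lt_sum_of_nonempty Finset.univ_nonempty
        intro i _
        exact Int.ceil_lt_add_one _
      have hsum2 : ∑ i : Fin l, ((n : ℚ) * (p' i : ℚ) / (p i : ℚ) + 1)
          = (n : ℚ) * ∑ i, ((p' i : ℚ) / (p i : ℚ)) + l := by
        rw [Finset.sum_add_distrib, Finset.mul_sum]
        simp [mul_div_assoc]
      have hPpq : (0:ℚ) < (P:ℚ) := by exact_mod_cast hPpos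
      have hPne : (P : ℚ) ≠ 0 := ne_of_gt hPpq
      have hfrac : ∑ i : Fin l, ((p' i : ℚ) / (p i : ℚ)) = (E : ℚ) - 1 / (P : ℚ) := by
        have hEq : (E : ℚ) * (P:ℚ) - ∑ i, ((Q i : ℤ) : ℚ) * (p' i : ℚ) = 1 := by
          exact_mod_cast congrArg (fun z : ℤ => (z : ℚ)) hE
        have hrw2 : ∑ i, ((Q i : ℤ) : ℚ) * (p' i : ℚ)
            = ∑ i, (P : ℚ) * ((p' i : ℚ) / (p i : ℚ)) := by
          apply Finset.sum_congr rfl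
          intro i _
          rw [hQiq i]
          ring
        rw [hrw2, ← Finset.mul_sum] at hEq
        field_simp
        linarith
      have hEn : (1 : ℚ) + (E : ℚ) * (n : ℚ) - (∑ i, (⌈(n * p' i : ℚ) / p i⌉ : ℚ))
          > 1 - l + (n : ℚ) / (P : ℚ) := by
        rw [hsum2, hfrac] at hstrict
        have hexp : (n:ℚ) * ((E:ℚ) - 1/(P:ℚ)) = (n:ℚ) * (E:ℚ) - (n:ℚ) / (P:ℚ) := by ring
        rw [hexp] at hstrict
        linarith
      have hnT : ((l : ℚ) - 1) * (P : ℚ) ≤ (n : ℚ) := by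
        have h8 : ((T : ℕ) : ℚ) ≤ (n : ℚ) := by exact_mod_cast hn
        rw [hT] at h8
        push_cast at h8
        have hlq : ((l - 1 : ℕ) : ℚ) = (l:ℚ) - 1 := by
          have h7 : (1:ℕ) ≤ l := by omega
          push_cast [Nat.cast_sub h7]; ring
        have hPq : ((Pn : ℕ) : ℚ) = (P : ℚ) := by exact_mod_cast hPcast
        rw [hlq, hPq] at h8
        exact h8
      have h0 : ((l:ℚ) - 1) ≤ (n:ℚ) / (P:ℚ) := by
        rw [le_div_iff₀ hPpq]; linarith [hnT]
      have hfinq : (0:ℚ) < 1 + ((E : ℤ) : ℚ) * (n : ℚ)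
          - ∑ i, ((⌈(n * p' i : ℚ) / p i⌉ : ℤ) : ℚ) := by
        linarith [hEn, h0]
      have hZ : (0:ℤ) < 1 + E * (n : ℤ) - ∑ i, ⌈(n * p' i : ℚ) / p i⌉ := by
        exact_mod_cast hfinq
      rw [habs]
      linarith [hZ]
    rw [hfrw]
    exact min_eq_left hD.le
  have hfinsum : ∑ᶠ n : ℕ, f n = ∑ n ∈ Finset.range T, f n := by
    apply finsum_eq_finset_sum_of_support_subset
    intro n hn
    simp only [Function.mem_support] at hn
    simp only [Finset.coe_range, Set.mem_Iio]
    by_contra h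
    exact hn (hsupp n (by omega))
  -- the good set
  classical
  obtain ⟨G, hG⟩ : ∃ G : Finset ℕ, G = (Finset.Icc 1 A).image (fun a => (N a).toNat) :=
    ⟨_, rfl⟩
  have hNinj : Set.InjOn (fun a => (N a).toNat) (Finset.Icc 1 A : Set ℕ) := by
    intro a ha b hb hab
    simp only [Finset.coe_Icc, Set.mem_Icc] at ha hb
    have hNab : N a = N b := by
      have h9 := congrArg (fun m : ℕ => (m : ℤ)) hab
      simpa [hNnat a, hNnat b] using h9
    have hrec : ∀ x : ℕ, 1 ≤ x → x ≤ A → (N x * (p' last : ℤ)) % (p last) = x := by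
      intro x hx1 hx2
      have h1 : N x * (p' last : ℤ) = aa x last + (p last : ℤ) * q x last := by
        have := hqeq x last; linarith
      rw [h1, Int.add_mul_emod_self_left]
      have hax : aa x last = (x : ℤ) := by rw [haa]; simp
      rw [hax]
      apply Int.emod_eq_of_lt (by positivity)
      have h10 := (haabound x hx1 hx2 last).2
      rw [hax] at h10
      exact h10
    have r1 := hrec a ha.1 ha.2
    have r2 := hrec b hb.1 hb.2
    rw [hNab] at r1
    have h11 : (a : ℤ) = (b : ℤ) := by rw [← r1]; exact r2
    exact_mod_cast h11
  have hGcard : G.card = A := by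
    rw [hG, Finset.card_image_of_injOn hNinj, Nat.card_Icc]
    omega
  have hGsub : G ⊆ Finset.range T := by
    intro n hn
    rw [hG] at hn
    simp only [Finset.mem_image, Finset.mem_Icc] at hn
    obtain ⟨a, _, rfl⟩ := hn
    rw [Finset.mem_range, hT]
    have h1 : N a ≤ P := (hNrange a).2
    have h2 : ((N a).toNat : ℤ) ≤ (Pn : ℤ) := by rw [hNnat a, hPcast]; exact h1
    have h3 : (N a).toNat ≤ Pn := by exact_mod_cast h2
    have hPn1 : 1 ≤ Pn := by
      have h12 : (0:ℤ) < (Pn:ℤ) := by rw [hPcast]; exact hPpos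
      omega
    have h13 : 2 * Pn ≤ (l - 1) * Pn := Nat.mul_le_mul_right _ (by omega)
    omega
  -- each good n contributes at least 1
  have hgood : ∀ n ∈ G, f n ≤ -1 := by
    intro n hn
    rw [hG] at hn
    simp only [Finset.mem_image, Finset.mem_Icc] at hn
    obtain ⟨a, ⟨ha1, ha2⟩, rfl⟩ := hn
    have hceq : ∑ i, ⌈(((N a).toNat : ℕ) * p' i : ℚ) / p i⌉ = (∑ i, q a i) + l := by
      have h14 : ∀ i ∈ Finset.univ, ⌈(((N a).toNat : ℕ) * p' i : ℚ) / p i⌉ = q a i + 1 :=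
        fun i _ => hceil a ha1 ha2 i
      rw [Finset.sum_congr rfl h14, Finset.sum_add_distrib]
      simp
    have hDval : 1 + |e0| * (((N a).toNat : ℕ) : ℤ)
          - ∑ i, ⌈(((N a).toNat : ℕ) * p' i : ℚ) / p i⌉
        = 1 - l + c a := by
      rw [hceq, habs, hsumq a, hNnat a]
      ring
    rw [hfrw, hDval]
    have h15 := hclt a ha1 ha2
    have hmin : min (0:ℤ) (1 - l + c a) ≤ 1 - l + c a := min_le_right _ _
    have hl3 : (3:ℤ) ≤ (l:ℤ) := by exact_mod_cast hl
    omega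
  -- conclude k ≥ A
  have hAk : (A : ℤ) ≤ (k : ℤ) := by
    have hsub : ∑ n ∈ G, (-f n) ≤ ∑ n ∈ Finset.range T, (-f n) := by
      apply Finset.sum_le_sum_of_subset_of_nonneg hGsub
      intro n _ _
      exact neg_nonneg.mpr (hfnonpos n)
    have hlow : (G.card : ℤ) * 1 ≤ ∑ n ∈ G, (-f n) := by
      have h16 := Finset.card_nsmul_le_sum G (fun n => -f n) 1
        (fun n hn => by show (1:ℤ) ≤ -f n; linarith [hgood n hn])
      simpa [nsmul_eq_mul] using h16
    have habs2 : |∑ᶠ n : ℕ, f n| = -∑ n ∈ Finset.range T, f n := by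
      rw [hfinsum, abs_of_nonpos (Finset.sum_nonpos fun n _ => hfnonpos n)]
    rw [habs2] at hκ'
    rw [hGcard] at hlow
    have heq : -∑ n ∈ Finset.range T, f n = ∑ n ∈ Finset.range T, (-f n) := by
      rw [← Finset.sum_neg_distrib]
    omega
  -- conclude
  intro i
  have hAk' : A ≤ k := by exact_mod_cast hAk
  have hlastb : p last ≤ 6 * k + 6 := by
    have h17 := Nat.div_add_mod (p last - 1) 6
    have h18 : (p last - 1) % 6 < 6 := Nat.mod_lt _ (by norm_num)
    omega
  have hple : p i ≤ p last := by
    apply hmono.monotone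
    rw [Fin.le_def]
    simp only [hlast]
    omega
  omega

private lemma ge_aux {l : ℕ} (p : Fin l → ℕ) (hp1 : ∀ i, 1 < p i) (hmono : StrictMono p) :
    ∀ m : ℕ, ∀ h : m < l, m + 2 ≤ p ⟨m, h⟩ := by
  intro m
  induction m with
  | zero => intro h; exact hp1 _
  | succ n ih =>
    intro h
    have h' : n < l := by omega
    have h2 := hmono (show (⟨n, h'⟩ : Fin l) < ⟨n + 1, h⟩ by simp [Fin.lt_def])
    have := ih h'
    omega

/-- For every positive integer `k`, there are only finitely many tuples `(p₁, …, p_l)` of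
pairwise coprime integers with `l ≥ 3`, `1 < p₁ < … < p_l` and `κ(p₁,…,p_l) = k`. -/
theorem stmt_15 (k : ℕ) (hk : 0 < k) :
    {x : (l : ℕ) × (Fin l → ℕ) |
      3 ≤ x.1 ∧ (∀ i, 1 < x.2 i) ∧ StrictMono x.2 ∧
      (∀ i j, i ≠ j → Nat.Coprime (x.2 i) (x.2 j)) ∧
      ∃ (e0 : ℤ) (p' : Fin x.1 → ℕ),
        (∀ i, p' i ≤ x.2 i - 1) ∧
        e0 * ∏ i, (x.2 i : ℤ)
          + ∑ i, (∏ j ∈ Finset.univ.erase i, (x.2 j : ℤ)) * (p' i : ℤ) = -1 ∧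
        |∑ᶠ n : ℕ, min 0 (1 + |e0| * (n : ℤ) - ∑ i, ⌈(n * p' i : ℚ) / x.2 i⌉)|
          = (k : ℤ)}.Finite := by
  set F : ((m : Fin (6 * k + 6)) × (Fin (m : ℕ) → Fin (6 * k + 7))) → ((l : ℕ) × (Fin l → ℕ)) :=
    fun y => ⟨(y.1 : ℕ), fun i => (y.2 i : ℕ)⟩ with hF
  apply Set.Finite.subset (Set.finite_range F)
  rintro ⟨l, pp⟩ ⟨hl, hp1, hmono, hcop, e0, p', hp'b, heq, hsum⟩
  dsimp only at hl hp1 hmono hcop hp'b heq hsum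
  have hb : ∀ i, pp i ≤ 6 * k + 6 := key_bound hl pp hp1 hmono e0 p' heq k hsum
  have hlast : (l - 1) + 2 ≤ pp ⟨l - 1, by omega⟩ := ge_aux pp hp1 hmono (l - 1) (by omega)
  have hlb : l < 6 * k + 6 := by
    have := hb ⟨l - 1, by omega⟩
    omega
  exact ⟨⟨⟨l, hlb⟩, fun i => ⟨pp i, by have := hb i; omega⟩⟩, rfl⟩
end

section
/- For every positive integer k, one has κ(2, 3, 6k+1) = k. -/
/-!
The defining equation reads `6r' + 1 = m(6k + 1)` with `m = -(6e₀ + 3p' + 2q')`; since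
`m ≡ 1 (mod 6)` and `0 ≤ r' ≤ 6k`, this forces `m = 1`, hence `e₀ = -1`, `p' = q' = 1`,
`r' = k`. Write `n = 6a + b` with `0 ≤ b < 6`. Then `1 + n - ⌈n/2⌉ - ⌈n/3⌉` is `a` for `b = 1` and `a + 1` otherwise, while
`⌈nk/(6k+1)⌉` is at most `a + 1`, at most `a` for `b = 0`, and for `b = 1` exceeds `a` exactly
when `a < k`. So `Δ` is nonnegative except for `Δ(6a + 1) = -1` with `a < k`.
-/

namespace Triple236

lemma invariants_eq {k : ℕ} {e0 : ℤ} {p' q' r' : ℕ}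
    (hp' : p' ≤ 1) (hq' : q' ≤ 2) (hr' : r' ≤ 6 * k)
    (heq : e0 * (2 * 3 * (6 * (k : ℤ) + 1)) + (p' : ℤ) * 3 * (6 * (k : ℤ) + 1)
      + 2 * (q' : ℤ) * (6 * (k : ℤ) + 1) + 2 * 3 * (r' : ℤ) = -1) :
    e0 = -1 ∧ p' = 1 ∧ q' = 1 ∧ k = r' := by
  obtain ⟨m, hm_def⟩ : ∃ m : ℤ, m = -(6 * e0 + 3 * p' + 2 * q') := ⟨_, rfl⟩
  have hm : 6 * (r' : ℤ) + 1 = m * (6 * k + 1) := by rw [hm_def]; linear_combination heq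
  have hm_pos : 0 < m := by nlinarith
  have hm_lt : m < 6 := by nlinarith
  interval_cases m <;> omega

/-- `Δ` for `(2, 3, 6k + 1)`, whose invariants are `e₀ = -1`, `p' = q' = 1`, `r' = k`. -/
def delta (k n : ℕ) : ℤ :=
  1 + n - ⌈(n : ℚ) / 2⌉ - ⌈(n : ℚ) / 3⌉ - ⌈(n * k : ℚ) / (6 * k + 1)⌉

variable (k : ℕ) {n : ℕ}

lemma ceil_le_of_le_six_mul_add_five {a : ℕ} (h : n ≤ 6 * a + 5) :
    ⌈(n * k : ℚ) / (6 * k + 1)⌉ ≤ a + 1 := by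
  rw [Int.ceil_le, div_le_iff₀ (by positivity)]
  have : (n : ℚ) ≤ 6 * a + 5 := by exact_mod_cast h
  push_cast
  nlinarith

lemma ceil_le_of_le_six_mul {a : ℕ} (h : n ≤ 6 * a) : ⌈(n * k : ℚ) / (6 * k + 1)⌉ ≤ a := by
  rw [Int.ceil_le, div_le_iff₀ (by positivity)]
  have : (n : ℚ) ≤ 6 * a := by exact_mod_cast h
  push_cast
  nlinarith

lemma lt_ceil_iff_of_eq_six_mul_add_one {a : ℕ} (h : n = 6 * a + 1) :
    (a : ℤ) < ⌈(n * k : ℚ) / (6 * k + 1)⌉ ↔ a < k := by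
  rw [Int.lt_ceil, lt_div_iff₀ (by positivity), h, ← Nat.cast_lt (α := ℚ)]
  push_cast
  constructor <;> intro <;> linarith

lemma min_zero_delta (n : ℕ) :
    min 0 (delta k n) = if n % 6 = 1 ∧ n / 6 < k then -1 else 0 := by
  have h2 := Rat.ceil_natCast_div_natCast n 2
  have h3 := Rat.ceil_natCast_div_natCast n 3
  have hC := ceil_le_of_le_six_mul_add_five k (n := n) (a := n / 6) (by omega)
  have hC0 : n % 6 = 0 → ⌈(n * k : ℚ) / (6 * k + 1)⌉ ≤ (n / 6 : ℕ) := fun h0 ↦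
    ceil_le_of_le_six_mul k (by omega)
  have hC1 : n % 6 = 1 → ((n / 6 : ℕ) < ⌈(n * k : ℚ) / (6 * k + 1)⌉ ↔ n / 6 < k) := fun h1 ↦
    lt_ceil_iff_of_eq_six_mul_add_one k (by omega)
  push_cast at h2 h3 hC
  unfold delta
  rw [h2, h3]
  split_ifs <;> omega

lemma finsum_min_zero_delta : ∑ᶠ n, min 0 (delta k n) = -k := by
  set s := (Finset.range k).image (fun j ↦ 6 * j + 1)
  have hs : ∀ n, n ∈ s ↔ n % 6 = 1 ∧ n / 6 < k := fun n ↦ by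
    simp only [s, Finset.mem_image, Finset.mem_range]
    constructor
    · rintro ⟨j, hj, rfl⟩; omega
    · intro h; exact ⟨n / 6, h.2, by omega⟩
  have hf : ∀ n, min 0 (delta k n) = if n ∈ s then -1 else 0 := fun n ↦ by
    simp only [min_zero_delta, hs]
  have hsupp : Function.support (fun n ↦ min 0 (delta k n)) ⊆ s :=
    Function.support_subset_iff'.2 fun n hn ↦ by simpa [hf] using hn
  rw [finsum_eq_sum_of_support_subset _ hsupp, Finset.sum_congr rfl fun n hn ↦ by rw [hf, if_pos hn],
    Finset.sum_const, Finset.card_image_of_injective _ fun i j h ↦ by omega, Finset.card_range]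
  simp

end Triple236

theorem stmt_16_general (k : ℕ)
    (e0 : ℤ) (p' q' r' : ℕ)
    (hp' : p' ≤ 2 - 1) (hq' : q' ≤ 3 - 1) (hr' : r' ≤ (6 * k + 1) - 1)
    (heq : e0 * (2 * 3 * (6 * (k : ℤ) + 1)) + (p' : ℤ) * 3 * (6 * (k : ℤ) + 1)
      + 2 * (q' : ℤ) * (6 * (k : ℤ) + 1) + 2 * 3 * (r' : ℤ) = -1)
    (Δ : ℕ → ℤ)
    (hΔ : ∀ n : ℕ, Δ n = 1 + |e0| * n - ⌈(n * p' : ℚ) / 2⌉ - ⌈(n * q' : ℚ) / 3⌉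
      - ⌈(n * r' : ℚ) / (6 * (k : ℚ) + 1)⌉) :
    |∑ᶠ n : ℕ, min 0 (Δ n)| = (k : ℤ) := by
  obtain ⟨rfl, rfl, rfl, rfl⟩ := Triple236.invariants_eq hp' hq' (by omega) heq
  have hΔ_eq : Δ = Triple236.delta k := funext fun n ↦ by simp [hΔ, Triple236.delta]
  rw [hΔ_eq, Triple236.finsum_min_zero_delta, abs_neg, Nat.abs_cast]

/-- For every positive integer `k`, one has `κ(2, 3, 6k+1) = k`. -/
theorem stmt_16 (k : ℕ) (hk : 0 < k)
    (e0 : ℤ) (p' q' r' : ℕ)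
    (hp' : p' ≤ 2 - 1) (hq' : q' ≤ 3 - 1) (hr' : r' ≤ (6 * k + 1) - 1)
    (heq : e0 * (2 * 3 * (6 * (k : ℤ) + 1)) + (p' : ℤ) * 3 * (6 * (k : ℤ) + 1)
      + 2 * (q' : ℤ) * (6 * (k : ℤ) + 1) + 2 * 3 * (r' : ℤ) = -1)
    (Δ : ℕ → ℤ)
    (hΔ : ∀ n : ℕ, Δ n = 1 + |e0| * n - ⌈(n * p' : ℚ) / 2⌉ - ⌈(n * q' : ℚ) / 3⌉
      - ⌈(n * r' : ℚ) / (6 * (k : ℚ) + 1)⌉) :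
    |∑ᶠ n : ℕ, min 0 (Δ n)| = (k : ℤ) :=
  stmt_16_general k e0 p' q' r' hp' hq' hr' heq Δ hΔ
end

section
/- Let p, q, r be pairwise coprime integers with 1 < p < q < r. Then p·q·r − p·q − p·r − q·r < p·r if and only if (p,q,r) = (3,4,5), or (p,q,r) = (2,5,7), or (p,q,r) = (2,5,9), or (p = 2 and q = 3). -/
/-!
Dividing by `pqr`, the inequality reads `1 < 1/p + 2/q + 1/r`. Since `p < q < r`, the right side
is below `4/p`, so `p ≤ 3`. For `p = 3` it forces `q = 4, r = 5`; for `p = 2` it becomes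
`1/2 < 2/q + 1/r`, which holds for `q = 3`, fails for `q ≥ 6`, and for `q = 5` means `r < 10`.
Coprimality with `2` removes `q = 4` and the even `r`.
-/

open Nat

lemma int_sub_lt_iff_nat_lt (p q r : ℕ) :
    ((p * q * r : ℤ) - p * q - p * r - q * r < (p * r : ℤ)) ↔
      p * q * r < p * q + 2 * (p * r) + q * r := by
  zify
  constructor <;> intro h <;> linarith

section Classification

variable {p q r : ℕ}

lemma le_three_of_mul_lt (h : p * q * r < p * q + 2 * (p * r) + q * r)
    (hpq : p < q) (hqr : q < r) : p ≤ 3 := by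
  have hpq_lt : p * q < q * r := Nat.mul_lt_mul'' hpq hqr
  have hpr_lt : p * r < q * r := Nat.mul_lt_mul_of_pos_right hpq (by omega)
  by_contra! hp4
  have : 4 * (q * r) ≤ p * q * r := by
    rw [Nat.mul_assoc]
    exact Nat.mul_le_mul_right _ hp4
  omega

lemma eq_four_five_of_three_mul_lt (h : 3 * q * r < 3 * q + 2 * (3 * r) + q * r)
    (hq : 3 < q) (hqr : q < r) : q = 4 ∧ r = 5 := by
  have hq4 : q ≤ 4 := by nlinarith
  obtain rfl : q = 4 := by omega
  omega

lemma eq_three_or_eq_five_of_two_mul_lt (h : 2 * q * r < 2 * q + 2 * (2 * r) + q * r)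
    (hq : 2 < q) (hqr : q < r) (hcopq : Coprime 2 q) (hcopr : Coprime 2 r) :
    q = 3 ∨ q = 5 ∧ (r = 7 ∨ r = 9) := by
  have hq5 : q ≤ 5 := by nlinarith
  interval_cases q
  · exact .inl rfl
  · exact absurd hcopq (by decide)
  · have hr9 : r ≤ 9 := by omega
    interval_cases r <;> first | exact absurd hcopr (by decide) | simp

lemma classification_of_mul_lt (h : p * q * r < p * q + 2 * (p * r) + q * r)
    (hp : 1 < p) (hpq : p < q) (hqr : q < r) (hcopq : Coprime p q) (hcopr : Coprime p r) :
    (p, q, r) = (3, 4, 5) ∨ (p, q, r) = (2, 5, 7) ∨ (p, q, r) = (2, 5, 9) ∨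
      (p = 2 ∧ q = 3) := by
  have hp3 := le_three_of_mul_lt h hpq hqr
  interval_cases p
  · rcases eq_three_or_eq_five_of_two_mul_lt h hpq hqr hcopq hcopr with
      hq | ⟨rfl, rfl | rfl⟩ <;> simp [*]
  · obtain ⟨rfl, rfl⟩ := eq_four_five_of_three_mul_lt h hpq hqr
    simp

lemma mul_lt_of_classification
    (h : (p, q, r) = (3, 4, 5) ∨ (p, q, r) = (2, 5, 7) ∨ (p, q, r) = (2, 5, 9) ∨
      (p = 2 ∧ q = 3)) :
    p * q * r < p * q + 2 * (p * r) + q * r := by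
  rcases h with h | h | h | ⟨rfl, rfl⟩
  all_goals first | (simp only [Prod.mk.injEq] at h; obtain ⟨rfl, rfl, rfl⟩ := h; norm_num) | omega

end Classification

theorem stmt_18_general (p q r : ℕ) (hp : 1 < p) (hpq : p < q) (hqr : q < r)
    (hcopq : Nat.Coprime p q) (hcopr : Nat.Coprime p r) :
    ((p * q * r : ℤ) - p * q - p * r - q * r < (p * r : ℤ)) ↔
      ((p, q, r) = (3, 4, 5) ∨ (p, q, r) = (2, 5, 7) ∨ (p, q, r) = (2, 5, 9) ∨
        (p = 2 ∧ q = 3)) := by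
  rw [int_sub_lt_iff_nat_lt]
  exact ⟨fun h => classification_of_mul_lt h hp hpq hqr hcopq hcopr, mul_lt_of_classification⟩

/-- For pairwise coprime integers `1 < p < q < r`:
`pqr - pq - pr - qr < pr` iff `(p,q,r)` is `(3,4,5)`, `(2,5,7)`, `(2,5,9)`,
or `p = 2` and `q = 3`. -/
theorem stmt_18 (p q r : ℕ) (hp : 1 < p) (hpq : p < q) (hqr : q < r)
    (hcopq : Nat.Coprime p q) (hcopr : Nat.Coprime p r) (hcoqr : Nat.Coprime q r) :
    ((p * q * r : ℤ) - p * q - p * r - q * r < (p * r : ℤ)) ↔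
      ((p, q, r) = (3, 4, 5) ∨ (p, q, r) = (2, 5, 7) ∨ (p, q, r) = (2, 5, 9) ∨
        (p = 2 ∧ q = 3)) :=
  stmt_18_general p q r hp hpq hqr hcopq hcopr
end
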